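/- arXiv:1312.2617 — 7 statements merged into one kernel-verified Lean document; each statement's English description precedes it below -/
import Mathlib

section
/- Fix an integer a ≥ 1 and an integer m ≥ 1. Let P(Y) = Σ_{l=0}^{d} p_l Y^l ∈ R[Y] be an m-triangular polynomial of degree d, and let t_{d−a}, …, t_d be nonzero complex numbers. For x = (x_0, …, x_a) ∈ ℂ^a × ℂ*, let ev_x : R → ℂ denote the ℂ-algebra homomorphism sending u_i to x_i for 0 ≤ i ≤ a (well defined since x_a ≠ 0). Then the map from ℂ^a × ℂ* to itself sending x to (t_{d−a}·ev_x(p_{d−a}), …, t_d·ev_x(p_d)) is surjective. -/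
open Polynomial

noncomputable section

/-- The ring `R = ℂ[u₀,…,u_{a−1}][u_a, u_a⁻¹]`: Laurent polynomials in `u_a`
over the polynomial ring `ℂ[u₀,…,u_{a−1}]`. -/
abbrev LaurentRing (a : ℕ) : Type := LaurentPolynomial (MvPolynomial (Fin a) ℂ)

/-- The generators `u_0, …, u_a` of `R`; `u i` for `i < a` is the polynomial variable `u_i`,
and `u a` is the Laurent variable `u_a`. -/
noncomputable def u (a : ℕ) (i : ℕ) : LaurentRing a :=
  if h : i < a then LaurentPolynomial.C (MvPolynomial.X (⟨i, h⟩ : Fin a))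
  else LaurentPolynomial.T 1

/-- `P ∈ R[Y]` is `m`-triangular of degree `d` if `deg P = d ≥ a` and for `d − a ≤ l ≤ d`
one has `p_l = q_l u_a^{m−1} u_{a−d+l} + P_l` with `q_l ∈ ℚ`, `q_l > 0`, and
`P_l ∈ ℂ[u_{a−d+l+1},…,u_a]`; for `l = d` this means `p_d = q_d u_a^m`. -/
def IsTriangular (a m d : ℕ) (P : Polynomial (LaurentRing a)) : Prop :=
  P.natDegree = d ∧ a ≤ d ∧
  (∃ q : ℚ, 0 < q ∧ P.coeff d = algebraMap ℚ (LaurentRing a) q * (u a a) ^ m) ∧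
  (∀ l, d - a ≤ l → l < d →
    ∃ (q : ℚ) (Pl : LaurentRing a), 0 < q ∧
      Pl ∈ Algebra.adjoin ℂ (u a '' {i : ℕ | a - (d - l) + 1 ≤ i ∧ i ≤ a}) ∧
      P.coeff l = algebraMap ℚ (LaurentRing a) q *
        ((u a a) ^ (m - 1) * u a (a - (d - l))) + Pl)

open Set

/-!
The equations are triangular. The top one reads `t_d q_d x_a ^ m = y_d` and has a solution
`x_a ≠ 0` because `ℂ` is algebraically closed. Once `x_a` is fixed, the equation for `p_{d-k}`
is affine in `x_{a-k}` with leading coefficient `t_{d-k} q_{d-k} x_a ^ (m-1) ≠ 0`, while its other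
terms only involve `x_{a-k+1}, …, x_a`; so the remaining coordinates are found by back
substitution.
-/

theorem exists_backSubstitution_solution {K : Type*} [Field K] (a : ℕ) (x₀ : K)
    (α β : ℕ → (ℕ → K) → K) (z : ℕ → K)
    (hα : ∀ k ∈ Icc 1 a, DependsOn (α k) (Ioc (a - k) a))
    (hβ : ∀ k ∈ Icc 1 a, DependsOn (β k) (Ioc (a - k) a))
    (hα₀ : ∀ k ∈ Icc 1 a, ∀ x : ℕ → K, x a = x₀ → α k x ≠ 0) :
    ∃ x : ℕ → K, x a = x₀ ∧ ∀ k ∈ Icc 1 a, α k x * x (a - k) + β k x = z k := by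
  suffices h : ∀ n ≤ a, ∃ x : ℕ → K, x a = x₀ ∧
      ∀ k ∈ Icc 1 n, α k x * x (a - k) + β k x = z k from h a le_rfl
  intro n
  induction n with
  | zero => exact fun _ => ⟨fun _ => x₀, rfl, by simp⟩
  | succ n ih =>
    intro hn
    obtain ⟨x, hxa, hx⟩ := ih (by omega)
    have hα₀' := hα₀ (n + 1) ⟨by omega, hn⟩ x hxa
    set v := (z (n + 1) - β (n + 1) x) / α (n + 1) x
    have hagree :
        ∀ k ≤ n + 1, ∀ j ∈ Ioc (a - k) a, Function.update x (a - (n + 1)) v j = x j :=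
      fun k hk j hj => Function.update_of_ne (by grind) _ _
    refine ⟨Function.update x (a - (n + 1)) v, ?_, ?_⟩
    · rw [hagree 1 (by omega) a (right_mem_Ioc.mpr (by omega)), hxa]
    · rintro k ⟨hk1, hk⟩
      have hka : k ∈ Icc 1 a := ⟨hk1, by omega⟩
      rw [hα k hka (hagree k hk), hβ k hka (hagree k hk)]
      obtain hk | rfl : k ≤ n ∨ k = n + 1 := by omega
      · rw [Function.update_of_ne (by omega)]
        exact hx k ⟨hk1, hk⟩
      · rw [Function.update_self, mul_div_cancel₀ _ hα₀', sub_add_cancel]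

theorem exists_ne_zero_pow_eq {K : Type*} [Field K] [IsAlgClosed K] {m : ℕ} (hm : m ≠ 0)
    {c : K} (hc : c ≠ 0) : ∃ ξ ≠ 0, ξ ^ m = c := by
  obtain ⟨ξ, hξ⟩ := IsAlgClosed.exists_pow_nat_eq c (Nat.pos_of_ne_zero hm)
  exact ⟨ξ, ne_zero_pow hm (hξ ▸ hc), hξ⟩

theorem map_algebraMap_rat {A B F : Type*} [Semiring A] [Algebra ℚ A] [DivisionRing B]
    [FunLike F A B] [RingHomClass F A B] (f : F) (r : ℚ) : f (algebraMap ℚ A r) = r :=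
  eq_ratCast ((f : A →+* B).comp (algebraMap ℚ A)) r

section Evaluation

variable {a : ℕ} (ev : ∀ x : ℕ → ℂ, x a ≠ 0 → (LaurentRing a →ₐ[ℂ] ℂ))

/-- `ev x hx p`, extended by the junk value `0` where `x a = 0`. -/
def evalOrZero (p : LaurentRing a) (x : ℕ → ℂ) : ℂ :=
  if hx : x a ≠ 0 then ev x hx p else 0

variable {ev}

theorem dependsOn_evalOrZero
    (hev : ∀ (x : ℕ → ℂ) (hx : x a ≠ 0) (i : ℕ), i ≤ a → ev x hx (u a i) = x i)
    {S : Set ℕ} (haS : a ∈ S) (hS : S ⊆ Iic a) {p : LaurentRing a}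
    (hp : p ∈ Algebra.adjoin ℂ (u a '' S)) : DependsOn (evalOrZero ev p) S := by
  intro x y hxy
  by_cases hx : x a = 0
  · simp [evalOrZero, hx, ← hxy a haS]
  have hy : y a ≠ 0 := hxy a haS ▸ hx
  simp only [evalOrZero, dif_pos hx, dif_pos hy]
  refine AlgHom.eqOn_adjoin_iff.mpr ?_ hp
  rintro _ ⟨i, hi, rfl⟩
  rw [hev _ _ i (hS hi), hev _ _ i (hS hi), hxy i hi]

end Evaluation

namespace IsTriangular

variable {a m d : ℕ} {P : Polynomial (LaurentRing a)}

theorem exists_coeff_sub_eq (hP : IsTriangular a m d P) (k : ℕ) (hk : k ∈ Icc 1 a) :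
    ∃ (q : ℚ) (R : LaurentRing a), 0 < q ∧ R ∈ Algebra.adjoin ℂ (u a '' Ioc (a - k) a) ∧
      P.coeff (d - k) =
        algebraMap ℚ (LaurentRing a) q * ((u a a) ^ (m - 1) * u a (a - k)) + R := by
  obtain ⟨-, had, -, hlow⟩ := hP
  obtain ⟨hk1, hka⟩ := hk
  have hk' : d - (d - k) = k := by omega
  have hIoc : {i | a - k + 1 ≤ i ∧ i ≤ a} = Ioc (a - k) a := rfl
  simpa only [hk', hIoc] using hlow (d - k) (by omega) (by omega)

end IsTriangular

theorem triangular_surjective_general (a : ℕ) (m : ℕ) (hm : 1 ≤ m) (d : ℕ)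
    (P : Polynomial (LaurentRing a)) (hP : IsTriangular a m d P)
    (t : ℕ → ℂ) (ht : ∀ l, d - a ≤ l → l ≤ d → t l ≠ 0)
    (ev : ∀ x : ℕ → ℂ, x a ≠ 0 → (LaurentRing a →ₐ[ℂ] ℂ))
    (hev : ∀ (x : ℕ → ℂ) (hx : x a ≠ 0) (i : ℕ), i ≤ a → ev x hx (u a i) = x i) :
    ∀ y : ℕ → ℂ, y d ≠ 0 → ∃ (x : ℕ → ℂ) (hx : x a ≠ 0),
      ∀ l, d - a ≤ l → l ≤ d → t l * ev x hx (P.coeff l) = y l := by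
  intro y hy
  choose! q R hq hR hcoeff using IsTriangular.exists_coeff_sub_eq hP
  obtain ⟨-, had, ⟨qd, hqd, hcd⟩, -⟩ := hP
  have htd : t d ≠ 0 := ht d (Nat.sub_le d a) le_rfl
  obtain ⟨ξ, hξ0, hξ⟩ := exists_ne_zero_pow_eq (Nat.one_le_iff_ne_zero.mp hm)
    (div_ne_zero hy (mul_ne_zero htd (Rat.cast_ne_zero.mpr hqd.ne')))
  obtain ⟨x, hxa, hx⟩ := exists_backSubstitution_solution a ξ (fun k x => q k * x a ^ (m - 1))
    (fun k => evalOrZero ev (R k)) (fun k => y (d - k) / t (d - k))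
    (fun k hk x y hxy => by simp only [hxy a (right_mem_Ioc.mpr (by grind))])
    (fun k hk => dependsOn_evalOrZero hev (right_mem_Ioc.mpr (by grind)) (fun _ h => h.2)
      (hR k hk))
    (fun k hk x hx => by simp [hξ0, hx, (hq k hk).ne'])
  have hx0 : x a ≠ 0 := hxa ▸ hξ0
  refine ⟨x, hx0, fun l hl hld => ?_⟩
  obtain rfl | hlt := hld.eq_or_lt
  · rw [hcd, map_mul, map_pow, map_algebraMap_rat, hev x hx0 a le_rfl, hxa, hξ]
    field_simp
  · obtain ⟨k, hk, rfl⟩ : ∃ k ∈ Icc 1 a, l = d - k :=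
      ⟨d - l, ⟨by omega, by omega⟩, by omega⟩
    have hsol := hx k hk
    simp only [evalOrZero, dif_pos hx0] at hsol
    rw [hcoeff k hk, map_add, map_mul, map_mul, map_pow, map_algebraMap_rat, hev x hx0 a le_rfl,
      hev x hx0 (a - k) (by omega), ← mul_assoc, hsol]
    field_simp [ht (d - k) (by omega) (by omega)]

/-- if `P` is `m`-triangular of degree `d` and `t_{d−a},…,t_d` are nonzero
complex numbers, then, denoting by `ev x hx` the `ℂ`-algebra homomorphism `R → ℂ`
sending `u_i` to `x_i` (for `x = (x_0,…,x_a) ∈ ℂ^a × ℂ*`), the map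
`x ↦ (t_{d−a}·ev_x(p_{d−a}), …, t_d·ev_x(p_d))` from `ℂ^a × ℂ*` to itself is surjective. -/
theorem triangular_surjective (a : ℕ) (ha : 1 ≤ a) (m : ℕ) (hm : 1 ≤ m) (d : ℕ)
    (P : Polynomial (LaurentRing a)) (hP : IsTriangular a m d P)
    (t : ℕ → ℂ) (ht : ∀ l, d - a ≤ l → l ≤ d → t l ≠ 0)
    (ev : ∀ x : ℕ → ℂ, x a ≠ 0 → (LaurentRing a →ₐ[ℂ] ℂ))
    (hev : ∀ (x : ℕ → ℂ) (hx : x a ≠ 0) (i : ℕ), i ≤ a → ev x hx (u a i) = x i) :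
    ∀ y : ℕ → ℂ, y d ≠ 0 → ∃ (x : ℕ → ℂ) (hx : x a ≠ 0),
      ∀ l, d - a ≤ l → l ≤ d → t l * ev x hx (P.coeff l) = y l :=
  triangular_surjective_general a m hm d P hP t ht ev hev
end
end

section
/- Fix an integer a ≥ 1. Let m, n ≥ 1 be integers, let P(Y) ∈ R[Y] be m-triangular of degree d and let Q(Y) ∈ R[Y] be n-triangular of degree e. Then P(Y)·Q(Y) is (m+n)-triangular (of degree d+e). -/
/-! For `1 ≤ k ≤ a`, the coefficient of `Y^(d+e-k)` in `P Q` is `∑_{i+j=d+e-k} p_i q_j`. Apart from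
the two corner terms `p_d q_{e-k}` and `p_{d-k} q_e`, every nonzero term has `d-k < i < d` and
`e-k < j < e`, and then both factors already lie in `ℂ[u_{a-k+1},…,u_a]` (which contains `u_a`).
Expanding the corners gives `(q_d q'_{e-k} + q_{d-k} q'_e) u_a^{m+n-1} u_{a-k}` plus terms of that
ring, using `m, n ≥ 1` to combine the powers of `u_a`. -/

open Polynomial

noncomputable section

open Finset

/-- `ℂ[u_{a-k+1}, …, u_a]`, the coefficient ring allowed for the correction term `P_l` with
`k = d - l`. -/
def adjoinLast (a k : ℕ) : Subalgebra ℂ (LaurentRing a) :=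
  Algebra.adjoin ℂ (u a '' {i : ℕ | a - k + 1 ≤ i ∧ i ≤ a})

lemma adjoinLast_mono (a : ℕ) : Monotone (adjoinLast a) := fun _ _ hkk' =>
  Algebra.adjoin_mono <| Set.image_mono fun _ ⟨hi, hia⟩ => ⟨by omega, hia⟩

lemma u_mem_adjoinLast {a k i : ℕ} (hki : a - k < i) (hia : i ≤ a) : u a i ∈ adjoinLast a k :=
  Algebra.subset_adjoin ⟨i, ⟨hki, hia⟩, rfl⟩

lemma u_self_ne_zero (a : ℕ) : u a a ≠ 0 := by
  simpa [u] using (LaurentPolynomial.isUnit_T (R := MvPolynomial (Fin a) ℂ) 1).ne_zero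

lemma Subalgebra.algebraMap_rat_mem {R A : Type*} [CommSemiring R] [Semiring A] [Algebra ℚ R]
    [Algebra R A] [Algebra ℚ A] [IsScalarTower ℚ R A] (S : Subalgebra R A) (q : ℚ) :
    algebraMap ℚ A q ∈ S :=
  IsScalarTower.algebraMap_apply ℚ R A q ▸ S.algebraMap_mem _

lemma Polynomial.exists_coeff_mul_eq_corners_add {R : Type*} [Semiring R] (S : AddSubmonoid R)
    {P Q : R[X]} {d e k : ℕ} (hP : P.natDegree ≤ d) (hQ : Q.natDegree ≤ e) (hk : 0 < k)
    (hkd : k ≤ d) (hke : k ≤ e)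
    (hS : ∀ i j, d - k < i → i < d → e - k < j → j < e → P.coeff i * Q.coeff j ∈ S) :
    ∃ s ∈ S, (P * Q).coeff (d + e - k) =
      P.coeff d * Q.coeff (e - k) + P.coeff (d - k) * Q.coeff e + s := by
  have h₁ : (d, e - k) ∈ antidiagonal (d + e - k) := by
    rw [HasAntidiagonal.mem_antidiagonal]; omega
  have h₂ : (d - k, e) ∈ (antidiagonal (d + e - k)).erase (d, e - k) := by
    rw [mem_erase, HasAntidiagonal.mem_antidiagonal, Ne, Prod.mk.injEq]; omega
  refine ⟨∑ x ∈ ((antidiagonal (d + e - k)).erase (d, e - k)).erase (d - k, e),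
    P.coeff x.1 * Q.coeff x.2, sum_mem fun x hx => ?_, by
      rw [coeff_mul, ← add_sum_erase _ _ h₁, ← add_sum_erase _ _ h₂, add_assoc]⟩
  obtain ⟨i, j⟩ := x
  simp only [mem_erase, HasAntidiagonal.mem_antidiagonal, Ne, Prod.mk.injEq] at hx
  rcases lt_or_ge d i with hdi | hid
  · simp [coeff_eq_zero_of_natDegree_lt (hP.trans_lt hdi)]
  rcases lt_or_ge e j with hej | hje
  · simp [coeff_eq_zero_of_natDegree_lt (hQ.trans_lt hej)]
  exact hS i j (by omega) (by omega) (by omega) (by omega)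

namespace IsTriangular

variable {a m d : ℕ} {P : Polynomial (LaurentRing a)}

lemma natDegree_le (hP : IsTriangular a m d P) : P.natDegree ≤ d := hP.1.le

lemma ne_zero (hP : IsTriangular a m d P) : P ≠ 0 := by
  obtain ⟨q, hq, hPd⟩ := hP.2.2.1
  refine fun h => mul_ne_zero ?_ (pow_ne_zero m (u_self_ne_zero a)) (hPd ▸ h ▸ coeff_zero d)
  exact (map_ne_zero_iff _ (algebraMap ℚ (LaurentRing a)).injective).2 hq.ne'

lemma exists_coeff_sub (hP : IsTriangular a m d P) {k : ℕ} (hk : 0 < k) (hka : k ≤ a) :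
    ∃ (q : ℚ) (Pk : LaurentRing a), 0 < q ∧ Pk ∈ adjoinLast a k ∧
      P.coeff (d - k) =
        algebraMap ℚ (LaurentRing a) q * ((u a a) ^ (m - 1) * u a (a - k)) + Pk := by
  have had := hP.2.1
  have hPk := hP.2.2.2 (d - k) (by omega) (by omega)
  rw [show d - (d - k) = k by omega] at hPk
  exact hPk

lemma coeff_mem_adjoinLast (hP : IsTriangular a m d P) {i k : ℕ} (hka : k ≤ a)
    (hki : d - k < i) (hid : i < d) : P.coeff i ∈ adjoinLast a k := by
  obtain ⟨q, Pi, -, hPi, hcoeff⟩ := hP.2.2.2 i (by omega) hid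
  rw [hcoeff]
  refine add_mem (mul_mem (Subalgebra.algebraMap_rat_mem _ q) (mul_mem ?_ ?_))
    (adjoinLast_mono a (by omega) hPi)
  · exact pow_mem (u_mem_adjoinLast (by omega) le_rfl) _
  · exact u_mem_adjoinLast (by omega) (by omega)

variable {n e : ℕ} {Q : Polynomial (LaurentRing a)}

lemma exists_coeff_mul_sub (hP : IsTriangular a m d P) (hQ : IsTriangular a n e Q)
    (hm : 1 ≤ m) (hn : 1 ≤ n) {k : ℕ} (hk : 0 < k) (hka : k ≤ a) :
    ∃ (q : ℚ) (R : LaurentRing a), 0 < q ∧ R ∈ adjoinLast a k ∧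
      (P * Q).coeff (d + e - k) =
        algebraMap ℚ (LaurentRing a) q * ((u a a) ^ (m + n - 1) * u a (a - k)) + R := by
  set A := algebraMap ℚ (LaurentRing a)
  obtain ⟨qP, hqP, hPd⟩ := hP.2.2.1
  obtain ⟨qQ, hqQ, hQe⟩ := hQ.2.2.1
  obtain ⟨q₁, P₁, hq₁, hP₁, hPk⟩ := hP.exists_coeff_sub hk hka
  obtain ⟨q₂, Q₂, hq₂, hQ₂, hQk⟩ := hQ.exists_coeff_sub hk hka
  obtain ⟨s, hs, hcoeff⟩ := exists_coeff_mul_eq_corners_add (adjoinLast a k).toAddSubmonoid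
    hP.natDegree_le hQ.natDegree_le hk (hka.trans hP.2.1) (hka.trans hQ.2.1)
    fun i j hi hid hj hje => (mul_mem (hP.coeff_mem_adjoinLast hka hi hid)
      (hQ.coeff_mem_adjoinLast hka hj hje) : _ ∈ adjoinLast a k)
  have hu : u a a ∈ adjoinLast a k := u_mem_adjoinLast (by omega) le_rfl
  refine ⟨qP * q₂ + q₁ * qQ, A qP * u a a ^ m * Q₂ + P₁ * (A qQ * u a a ^ n) + s,
    by positivity, ?_, ?_⟩
  · refine add_mem (add_mem ?_ ?_) hs
    · exact mul_mem (mul_mem (Subalgebra.algebraMap_rat_mem _ qP) (pow_mem hu m)) hQ₂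
    · exact mul_mem hP₁ (mul_mem (Subalgebra.algebraMap_rat_mem _ qQ) (pow_mem hu n))
  · have hpow₁ : u a a ^ m * u a a ^ (n - 1) = u a a ^ (m + n - 1) := by
      rw [← pow_add]; congr 1; omega
    have hpow₂ : u a a ^ (m - 1) * u a a ^ n = u a a ^ (m + n - 1) := by
      rw [← pow_add]; congr 1; omega
    rw [hcoeff, hPd, hQe, hPk, hQk, map_add, map_mul, map_mul]
    linear_combination (A qP * A q₂ * u a (a - k)) * hpow₁ + (A q₁ * A qQ * u a (a - k)) * hpow₂

end IsTriangular

theorem mul_isTriangular_general (a : ℕ) (m n : ℕ) (hm : 1 ≤ m) (hn : 1 ≤ n) (d e : ℕ)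
    (P Q : Polynomial (LaurentRing a))
    (hP : IsTriangular a m d P) (hQ : IsTriangular a n e Q) :
    IsTriangular a (m + n) (d + e) (P * Q) := by
  refine ⟨by rw [natDegree_mul hP.ne_zero hQ.ne_zero, hP.1, hQ.1], hP.2.1.trans (Nat.le_add_right d e),
    ?_, fun l hl hld => ?_⟩
  · obtain ⟨qP, hqP, hPd⟩ := hP.2.2.1
    obtain ⟨qQ, hqQ, hQe⟩ := hQ.2.2.1
    refine ⟨qP * qQ, by positivity, ?_⟩
    rw [coeff_mul_add_eq_of_natDegree_le hP.natDegree_le hQ.natDegree_le, hPd, hQe, map_mul,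
      pow_add]
    ring
  · obtain ⟨q, R, hq, hR, hcoeff⟩ :=
      hP.exists_coeff_mul_sub hQ hm hn (k := d + e - l) (by omega) (by omega)
    rw [Nat.sub_sub_self hld.le] at hcoeff
    exact ⟨q, R, hq, hR, hcoeff⟩

/-- the product of an `m`-triangular polynomial of degree `d`
and an `n`-triangular polynomial of degree `e` is `(m+n)`-triangular (of degree `d+e`). -/
theorem mul_isTriangular (a : ℕ) (ha : 1 ≤ a) (m n : ℕ) (hm : 1 ≤ m) (hn : 1 ≤ n) (d e : ℕ)
    (P Q : Polynomial (LaurentRing a))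
    (hP : IsTriangular a m d P) (hQ : IsTriangular a n e Q) :
    IsTriangular a (m + n) (d + e) (P * Q) :=
  mul_isTriangular_general a m n hm hn d e P Q hP hQ
end
end

section
/- Fix an integer a ≥ 1. Let m ≥ 1 be an integer, let P(Y) ∈ R[Y] be m-triangular of degree d, and let Q(Y) ∈ R[Y] be a linear polynomial of degree e. Then P(Y)·Q(Y) is (m+1)-triangular (of degree d+e). -/
open Polynomial

noncomputable section

/-- `Q ∈ R[Y]` is linear of degree `e` if `deg Q = e ≤ a` and each coefficient satisfies
`p_l = q_l u_{a−e+l}` with `q_l ∈ ℚ`, `q_l > 0`. -/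
def IsLinear (a e : ℕ) (Q : Polynomial (LaurentRing a)) : Prop :=
  Q.natDegree = e ∧ e ≤ a ∧
  ∀ l ≤ e, ∃ q : ℚ, 0 < q ∧
    Q.coeff l = algebraMap ℚ (LaurentRing a) q * u a (a - e + l)

/-!
Write `k = d + e - l` and `S = ℂ[u_{a-k+1}, …, u_a]`. In `(PQ)_l = ∑_{i+j=l} p_i q_j`, every
term is, modulo `S`, a nonnegative rational multiple of `u_a^m u_{a-k}`: if both deficits
`d - i` and `e - j` are positive, both factors already lie in `S`; the term `p_d q_{e-k}` is a
positive multiple of `u_a^m u_{a-k}`; and `p_{d-k} q_e` is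
`(c u_a^{m-1} u_{a-k} + P_{d-k}) · c' u_a`.
The leading coefficient `p_d q_e` is a nonzero multiple of the unit `u_a^{m+1}`.
-/

section HasCoeffMod

variable {A σ : Type*} [Semiring A] [Algebra ℚ A] [SetLike σ A]

def HasCoeffMod (S : σ) (v : A) (q : ℚ) (x : A) : Prop :=
  ∃ r ∈ S, x = algebraMap ℚ A q * v + r

variable {S : σ} {v : A}

theorem hasCoeffMod_zero_of_mem {x : A} (hx : x ∈ S) : HasCoeffMod S v 0 x :=
  ⟨x, hx, by simp⟩

variable [AddSubmonoidClass σ A]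

theorem HasCoeffMod.add {q q' : ℚ} {x y : A} (hx : HasCoeffMod S v q x)
    (hy : HasCoeffMod S v q' y) : HasCoeffMod S v (q + q') (x + y) := by
  obtain ⟨r, hr, rfl⟩ := hx
  obtain ⟨r', hr', rfl⟩ := hy
  exact ⟨r + r', add_mem hr hr', by rw [map_add, add_mul]; abel⟩

theorem exists_nonneg_hasCoeffMod_sum {ι : Type*} {s : Finset ι} {f : ι → A}
    (h : ∀ i ∈ s, ∃ q, 0 ≤ q ∧ HasCoeffMod S v q (f i)) :
    ∃ q, 0 ≤ q ∧ HasCoeffMod S v q (∑ i ∈ s, f i) := by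
  refine Finset.sum_induction f (fun x => ∃ q, 0 ≤ q ∧ HasCoeffMod S v q x) ?_
    ⟨0, le_rfl, hasCoeffMod_zero_of_mem (zero_mem S)⟩ h
  rintro x y ⟨q, hq, hx⟩ ⟨q', hq', hy⟩
  exact ⟨q + q', add_nonneg hq hq', hx.add hy⟩

theorem exists_pos_hasCoeffMod_sum {ι : Type*} [DecidableEq ι] {s : Finset ι} {f : ι → A}
    {i₀ : ι} (hi₀ : i₀ ∈ s) (h₀ : ∃ q, 0 < q ∧ HasCoeffMod S v q (f i₀))
    (h : ∀ i ∈ s, ∃ q, 0 ≤ q ∧ HasCoeffMod S v q (f i)) :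
    ∃ q, 0 < q ∧ HasCoeffMod S v q (∑ i ∈ s, f i) := by
  obtain ⟨q₀, hq₀, hf₀⟩ := h₀
  obtain ⟨q, hq, hrest⟩ := exists_nonneg_hasCoeffMod_sum (S := S) (v := v)
    (fun i hi => h i (Finset.mem_of_mem_erase hi))
  rw [← Finset.sum_erase_add s f hi₀]
  exact ⟨q + q₀, by linarith, hrest.add hf₀⟩

end HasCoeffMod

/-- The subalgebra `ℂ[u_{a-k+1}, …, u_a]` of `R`. -/
def adjoinTopVars (a k : ℕ) : Subalgebra ℂ (LaurentRing a) :=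
  Algebra.adjoin ℂ (u a '' {i : ℕ | a - k + 1 ≤ i ∧ i ≤ a})

theorem u_mem_adjoinTopVars {a k i : ℕ} (h₁ : a - k + 1 ≤ i) (h₂ : i ≤ a) :
    u a i ∈ adjoinTopVars a k :=
  Algebra.subset_adjoin ⟨i, ⟨h₁, h₂⟩, rfl⟩

theorem adjoinTopVars_mono (a : ℕ) : Monotone (adjoinTopVars a) := fun _ _ hk =>
  Algebra.adjoin_mono (Set.image_mono fun _ ⟨h₁, h₂⟩ => ⟨by omega, h₂⟩)

theorem algebraMap_rat_mem_adjoinTopVars (a k : ℕ) (q : ℚ) :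
    algebraMap ℚ (LaurentRing a) q ∈ adjoinTopVars a k :=
  ((adjoinTopVars a k).restrictScalars ℚ).algebraMap_mem q

theorem algebraMap_mul_u_top_pow_ne_zero (a n : ℕ) {q : ℚ} (hq : q ≠ 0) :
    algebraMap ℚ (LaurentRing a) q * u a a ^ n ≠ 0 := by
  have hunit : IsUnit (u a a ^ n) := by
    simpa [u] using (LaurentPolynomial.isUnit_T 1).pow n
  rw [Ne, hunit.mul_left_eq_zero]
  exact (_root_.map_ne_zero _).mpr hq

namespace IsTriangular

variable {a m d : ℕ} {P : Polynomial (LaurentRing a)}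

theorem coeff_mem_adjoinTopVars (hP : IsTriangular a m d P) {i k : ℕ} (hi : d - i < k)
    (hk : k ≤ a) : P.coeff i ∈ adjoinTopVars a k := by
  obtain ⟨hdeg, -, ⟨q, -, htop⟩, hlow⟩ := hP
  rcases lt_trichotomy i d with hid | rfl | hdi
  · obtain ⟨q, r, -, hr, hPi⟩ := hlow i (by omega) hid
    rw [hPi]
    refine add_mem (mul_mem (algebraMap_rat_mem_adjoinTopVars a k q) (mul_mem ?_ ?_))
      (adjoinTopVars_mono a (by omega) hr)
    · exact pow_mem (u_mem_adjoinTopVars (by omega) le_rfl) _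
    · exact u_mem_adjoinTopVars (by omega) (by omega)
  · rw [htop]
    exact mul_mem (algebraMap_rat_mem_adjoinTopVars a k q)
      (pow_mem (u_mem_adjoinTopVars (by omega) le_rfl) _)
  · rw [coeff_eq_zero_of_natDegree_lt (by omega)]
    exact zero_mem _

theorem exists_pos_hasCoeffMod_coeff_sub (hP : IsTriangular a m d P) {k : ℕ} (hk₀ : 1 ≤ k)
    (hk : k ≤ a) : ∃ q, 0 < q ∧
      HasCoeffMod (adjoinTopVars a k) (u a a ^ (m - 1) * u a (a - k)) q (P.coeff (d - k)) := by
  obtain ⟨-, had, -, hlow⟩ := hP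
  obtain ⟨q, r, hq, hr, hPk⟩ := hlow (d - k) (by omega) (by omega)
  rw [Nat.sub_sub_self (by omega)] at hr hPk
  exact ⟨q, hq, r, hr, hPk⟩

end IsTriangular

namespace IsLinear

variable {a e : ℕ} {Q : Polynomial (LaurentRing a)}

theorem coeff_mem_adjoinTopVars (hQ : IsLinear a e Q) {j k : ℕ} (hj : e - j < k)
    (hk : k ≤ a) : Q.coeff j ∈ adjoinTopVars a k := by
  obtain ⟨hdeg, hea, hcoeff⟩ := hQ
  by_cases hje : j ≤ e
  · obtain ⟨q, -, hQj⟩ := hcoeff j hje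
    rw [hQj]
    exact mul_mem (algebraMap_rat_mem_adjoinTopVars a k q)
      (u_mem_adjoinTopVars (by omega) (by omega))
  · rw [coeff_eq_zero_of_natDegree_lt (by omega)]
    exact zero_mem _

theorem exists_pos_coeff_natDegree (hQ : IsLinear a e Q) :
    ∃ q : ℚ, 0 < q ∧ Q.coeff e = algebraMap ℚ (LaurentRing a) q * u a a := by
  obtain ⟨-, hea, hcoeff⟩ := hQ
  simpa [Nat.sub_add_cancel hea] using hcoeff e le_rfl

end IsLinear

section Product

variable {a m d e : ℕ} {P Q : Polynomial (LaurentRing a)}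

theorem exists_pos_coeff_mul_coeff_natDegree (hP : IsTriangular a m d P)
    (hQ : IsLinear a e Q) : ∃ q : ℚ, 0 < q ∧
      P.coeff d * Q.coeff e = algebraMap ℚ (LaurentRing a) q * u a a ^ (m + 1) := by
  obtain ⟨qP, hqP, hPd⟩ := hP.2.2.1
  obtain ⟨qQ, hqQ, hQe⟩ := hQ.exists_pos_coeff_natDegree
  refine ⟨qP * qQ, mul_pos hqP hqQ, ?_⟩
  rw [hPd, hQe, map_mul, pow_succ]
  ring

theorem exists_pos_hasCoeffMod_coeff_sub_mul (hm : 1 ≤ m) (hP : IsTriangular a m d P)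
    (hQ : IsLinear a e Q) {k : ℕ} (hk₀ : 1 ≤ k) (hk : k ≤ a) : ∃ q, 0 < q ∧
      HasCoeffMod (adjoinTopVars a k) (u a a ^ m * u a (a - k)) q
        (P.coeff (d - k) * Q.coeff e) := by
  obtain ⟨q, hq, r, hr, hPk⟩ := hP.exists_pos_hasCoeffMod_coeff_sub hk₀ hk
  obtain ⟨qQ, hqQ, hQe⟩ := hQ.exists_pos_coeff_natDegree
  refine ⟨q * qQ, mul_pos hq hqQ, r * (algebraMap ℚ _ qQ * u a a), ?_, ?_⟩
  · exact mul_mem hr (mul_mem (algebraMap_rat_mem_adjoinTopVars a k qQ)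
      (u_mem_adjoinTopVars (by omega) le_rfl))
  · rw [hPk, hQe, map_mul, ← Nat.sub_add_cancel hm, pow_succ, Nat.add_sub_cancel]
    ring

theorem exists_nonneg_hasCoeffMod_coeff_mul_coeff (hm : 1 ≤ m) (hP : IsTriangular a m d P)
    (hQ : IsLinear a e Q) {i j k : ℕ} (hijk : i + j + k = d + e) (hk₀ : 1 ≤ k)
    (hk : k ≤ a) :
    ∃ q, 0 ≤ q ∧
      HasCoeffMod (adjoinTopVars a k) (u a a ^ m * u a (a - k)) q (P.coeff i * Q.coeff j) := by
  have hmem : P.coeff i * Q.coeff j ∈ adjoinTopVars a k → ∃ q, 0 ≤ q ∧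
      HasCoeffMod (adjoinTopVars a k) (u a a ^ m * u a (a - k)) q (P.coeff i * Q.coeff j) :=
    fun h => ⟨0, le_rfl, hasCoeffMod_zero_of_mem h⟩
  by_cases hPi : d < i
  · exact hmem (by simp [coeff_eq_zero_of_natDegree_lt (hP.1 ▸ hPi)])
  by_cases hQj : e < j
  · exact hmem (by simp [coeff_eq_zero_of_natDegree_lt (hQ.1 ▸ hQj)])
  by_cases hid : i = d
  · have hea := hQ.2.1
    obtain ⟨qP, hqP, hPd⟩ := hP.2.2.1
    obtain ⟨qQ, hqQ, hQj⟩ := hQ.2.2 j (by omega)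
    refine ⟨qP * qQ, (mul_pos hqP hqQ).le, 0, zero_mem _, ?_⟩
    rw [hid, hPd, hQj, show a - e + j = a - k by omega, map_mul]
    ring
  by_cases hje : j = e
  · obtain ⟨q, hq, hterm⟩ := exists_pos_hasCoeffMod_coeff_sub_mul hm hP hQ hk₀ hk
    exact ⟨q, hq.le, by rwa [hje, show i = d - k by omega]⟩
  exact hmem (mul_mem (hP.coeff_mem_adjoinTopVars (by omega) hk)
    (hQ.coeff_mem_adjoinTopVars (by omega) hk))

theorem exists_pos_hasCoeffMod_coeff_mul (hm : 1 ≤ m) (hP : IsTriangular a m d P)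
    (hQ : IsLinear a e Q) {l : ℕ} (hl : d + e - a ≤ l) (hld : l < d + e) : ∃ q, 0 < q ∧
      HasCoeffMod (adjoinTopVars a (d + e - l)) (u a a ^ m * u a (a - (d + e - l))) q
        ((P * Q).coeff l) := by
  have had := hP.2.1
  rw [coeff_mul]
  refine exists_pos_hasCoeffMod_sum (i₀ := (d - (d + e - l), e))
    (Finset.HasAntidiagonal.mem_antidiagonal.2 (by omega)) ?_ fun x hx => ?_
  · exact exists_pos_hasCoeffMod_coeff_sub_mul hm hP hQ (by omega) (by omega)
  · rw [Finset.HasAntidiagonal.mem_antidiagonal] at hx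
    exact exists_nonneg_hasCoeffMod_coeff_mul_coeff hm hP hQ (by omega) (by omega) (by omega)

end Product

theorem mul_linear_isTriangular_general (a : ℕ) (m : ℕ) (hm : 1 ≤ m) (d e : ℕ)
    (P Q : Polynomial (LaurentRing a))
    (hP : IsTriangular a m d P) (hQ : IsLinear a e Q) :
    IsTriangular a (m + 1) (d + e) (P * Q) := by
  obtain ⟨q, hq, htop⟩ := exists_pos_coeff_mul_coeff_natDegree hP hQ
  have hlead : P.leadingCoeff * Q.leadingCoeff = P.coeff d * Q.coeff e := by
    rw [leadingCoeff, leadingCoeff, hP.1, hQ.1]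
  have hcoeff : (P * Q).coeff (d + e) = P.coeff d * Q.coeff e := by
    rw [← hlead, ← coeff_mul_degree_add_degree, hP.1, hQ.1]
  have hdeg : (P * Q).natDegree = d + e := by
    rw [natDegree_mul' (by rw [hlead, htop]; exact algebraMap_mul_u_top_pow_ne_zero a _ hq.ne'),
      hP.1, hQ.1]
  refine ⟨hdeg, le_add_right hP.2.1, ⟨q, hq, hcoeff.trans htop⟩, fun l hl hld => ?_⟩
  obtain ⟨q, hq, r, hr, hPQ⟩ := exists_pos_hasCoeffMod_coeff_mul hm hP hQ hl hld
  exact ⟨q, r, hq, hr, by rwa [Nat.add_sub_cancel]⟩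

/-- the product of an `m`-triangular polynomial of degree `d` and a linear
polynomial of degree `e` is `(m+1)`-triangular (of degree `d+e`). -/
theorem mul_linear_isTriangular (a : ℕ) (ha : 1 ≤ a) (m : ℕ) (hm : 1 ≤ m) (d e : ℕ)
    (P Q : Polynomial (LaurentRing a))
    (hP : IsTriangular a m d P) (hQ : IsLinear a e Q) :
    IsTriangular a (m + 1) (d + e) (P * Q) :=
  mul_linear_isTriangular_general a m hm d e P Q hP hQ
end
end

section
/- Let n, λ be integers with 1 ≤ n ≤ λ+1. Let I_n denote the set of sequences (k_0, …, k_a) of nonnegative integers such that Σ_{j=0}^{a} k_j = n and Σ_{j=0}^{a} j·k_j = n. Then there exist strictly positive rational numbers q_{(k_0,…,k_a)} for (k_0,…,k_a) ∈ I_n such that w_{n,λ}(Y) = Σ_{(k_0,…,k_a) ∈ I_n} q_{(k_0,…,k_a)} · Π_{j=0}^{a} (U^{(j)}(Y))^{k_j}, where U^{(j)} denotes the j-th derivative of U with respect to Y. -/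
open Polynomial

noncomputable section

/-- The polynomials `w_{n,λ}`: `w_{0,λ} = 1/(λ+1)` and
`w_{n,λ} = (λ−n+2)·U′·w_{n−1,λ} + U·w_{n−1,λ}′` for `n ≥ 1`. -/
noncomputable def wpoly {R : Type*} [CommRing R] [Algebra ℚ R]
    (U : Polynomial R) : ℕ → ℕ → Polynomial R
  | 0, lam => Polynomial.C (algebraMap ℚ R (1 / ((lam : ℚ) + 1)))
  | n + 1, lam =>
      ((lam : ℤ) - n + 1) • (Polynomial.derivative U * wpoly U n lam)
        + U * Polynomial.derivative (wpoly U n lam)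

/-- products `Π_j (U^{(j)})^{k_j}` -/
noncomputable def Pp {R : Type*} [CommRing R] (a : ℕ) (U : Polynomial R)
    (k : Fin (a+1) → ℕ) : Polynomial R :=
  ∏ j : Fin (a+1), (Polynomial.derivative^[(j:ℕ)] U) ^ (k j)

/-- the index set `I_n` -/
noncomputable def Iset (a n : ℕ) : Finset (Fin (a+1) → ℕ) :=
  (Fintype.piFinset fun _ => Finset.range (n+1)).filter
    (fun k => (∑ j, k j) = n ∧ (∑ j : Fin (a+1), (j:ℕ) * k j) = n)

lemma mem_Iset {a n : ℕ} {k : Fin (a+1) → ℕ} :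
    k ∈ Iset a n ↔ (∑ j, k j) = n ∧ (∑ j : Fin (a+1), (j:ℕ) * k j) = n := by
  simp only [Iset, Finset.mem_filter, Fintype.mem_piFinset, Finset.mem_range]
  refine ⟨fun h => h.2, fun h => ⟨fun j => ?_, h⟩⟩
  have := Finset.single_le_sum (f := k) (fun i _ => Nat.zero_le _) (Finset.mem_univ j)
  omega

lemma Pp_add {R : Type*} [CommRing R] (a : ℕ) (U : Polynomial R) (k l : Fin (a+1) → ℕ) :
    Pp a U (k + l) = Pp a U k * Pp a U l := by
  simp [Pp, pow_add, Finset.prod_mul_distrib]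

lemma Pp_single {R : Type*} [CommRing R] (a : ℕ) (U : Polynomial R) (j : Fin (a+1)) :
    Pp a U (Pi.single j 1) = Polynomial.derivative^[(j:ℕ)] U := by
  rw [Pp, Finset.prod_eq_single j]
  · simp
  · intro i _ hij; simp [Pi.single_apply, hij]
  · simp

lemma sum_single_w {a : ℕ} (w : Fin (a+1) → ℕ) (j : Fin (a+1)) :
    (∑ i, w i * (Pi.single j 1 : Fin (a+1) → ℕ) i) = w j := by
  rw [Finset.sum_eq_single j]
  · simp
  · intro i _ hij; simp [Pi.single_apply, hij]
  · simp

lemma sum_add_single_w {a : ℕ} (w : Fin (a+1) → ℕ) (k : Fin (a+1) → ℕ) (j : Fin (a+1)) :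
    (∑ i, w i * ((k + Pi.single j 1 : Fin (a+1) → ℕ)) i) = (∑ i, w i * k i) + w j := by
  have : ∀ i : Fin (a+1), w i * ((k + Pi.single j 1 : Fin (a+1) → ℕ)) i
      = w i * k i + w i * (Pi.single j 1 : Fin (a+1) → ℕ) i := by
    intro i; simp [Pi.add_apply, mul_add]
  rw [Finset.sum_congr rfl (fun i _ => this i), Finset.sum_add_distrib, sum_single_w]

lemma sum_add_single₁ {a : ℕ} (k : Fin (a+1) → ℕ) (j : Fin (a+1)) :
    (∑ i, (k + Pi.single j 1 : Fin (a+1) → ℕ) i) = (∑ i, k i) + 1 := by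
  have h := sum_add_single_w (fun _ => 1) k j
  simpa using h

lemma sum_add_single₂ {a : ℕ} (k : Fin (a+1) → ℕ) (j : Fin (a+1)) :
    (∑ i : Fin (a+1), (i:ℕ) * ((k + Pi.single j 1 : Fin (a+1) → ℕ)) i)
      = (∑ i : Fin (a+1), (i:ℕ) * k i) + (j:ℕ) :=
  sum_add_single_w (fun i => (i:ℕ)) k j

lemma sub_add_single {a : ℕ} (k : Fin (a+1) → ℕ) (j : Fin (a+1)) (h : k j ≠ 0) :
    (k - Pi.single j 1) + Pi.single j 1 = k := by
  funext i
  by_cases hij : i = j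
  · subst hij; simp; omega
  · simp [Pi.single_apply, hij]

lemma derivative_finset_prod' {R : Type*} [CommRing R] {ι : Type*} [DecidableEq ι]
    (s : Finset ι) (f : ι → Polynomial R) :
    Polynomial.derivative (∏ i ∈ s, f i)
      = ∑ i ∈ s, (∏ j ∈ s.erase i, f j) * Polynomial.derivative (f i) := by
  classical
  induction s using Finset.induction_on with
  | empty => simp
  | @insert a s ha ih =>
      have h1 : ∀ i ∈ s, (∏ j ∈ (insert a s).erase i, f j) * Polynomial.derivative (f i)
          = f a * ((∏ j ∈ s.erase i, f j) * Polynomial.derivative (f i)) := by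
        intro i hi
        rw [Finset.erase_insert_of_ne (fun h => ha (by rw [h]; exact hi)),
          Finset.prod_insert (fun h => ha (Finset.mem_of_mem_erase h))]
        ring
      rw [Finset.prod_insert ha, derivative_mul, ih, Finset.sum_insert ha,
        Finset.erase_insert ha, Finset.sum_congr rfl h1, ← Finset.mul_sum]
      ring

/-- `U^{(j)}` -/
noncomputable def fA {R : Type*} [CommRing R] (a : ℕ) (U : Polynomial R)
    (j : Fin (a+1)) : Polynomial R := Polynomial.derivative^[(j:ℕ)] U

lemma Pp_eq' {R : Type*} [CommRing R] (a : ℕ) (U : Polynomial R) (k : Fin (a+1) → ℕ) :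
    Pp a U k = ∏ j : Fin (a+1), fA a U j ^ k j := rfl

lemma Pp_single' {R : Type*} [CommRing R] (a : ℕ) (U : Polynomial R) (j : Fin (a+1)) :
    Pp a U (Pi.single j 1) = fA a U j := Pp_single a U j

def j0A (a : ℕ) : Fin (a+1) := ⟨0, by omega⟩
def j1A (a : ℕ) : Fin (a+1) := ⟨min 1 a, by omega⟩
def jsA (a : ℕ) (j : Fin (a+1)) : Fin (a+1) := ⟨min ((j:ℕ)+1) a, by omega⟩

lemma j0A_val (a : ℕ) : ((j0A a : Fin (a+1)) : ℕ) = 0 := rfl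
lemma j1A_val (a : ℕ) (ha : 1 ≤ a) : ((j1A a : Fin (a+1)) : ℕ) = 1 := by
  show min 1 a = 1; omega
lemma jsA_val (a : ℕ) (j : Fin (a+1)) (hj : (j:ℕ) < a) :
    ((jsA a j : Fin (a+1)) : ℕ) = (j:ℕ) + 1 := by
  show min ((j:ℕ)+1) a = (j:ℕ)+1; omega

lemma fA_deriv {R : Type*} [CommRing R] (a : ℕ) (U : Polynomial R) (j : Fin (a+1))
    (hj : (j:ℕ) < a) : Polynomial.derivative (fA a U j) = fA a U (jsA a j) := by
  unfold fA
  rw [jsA_val a j hj, Function.iterate_succ_apply']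

lemma fA_deriv_top {R : Type*} [CommRing R] (a : ℕ) (U : Polynomial R) (j : Fin (a+1))
    (hj : ¬ (j:ℕ) < a) (hU' : Polynomial.derivative^[a+1] U = 0) :
    Polynomial.derivative (fA a U j) = 0 := by
  have hv : (j:ℕ) = a := by have := j.isLt; omega
  unfold fA
  rw [hv]
  have h := Function.iterate_succ_apply' (⇑Polynomial.derivative) a U
  rw [← h, hU']

lemma fA_zero {R : Type*} [CommRing R] (a : ℕ) (U : Polynomial R) :
    fA a U (j0A a) = U := by
  unfold fA; rw [j0A_val]; rfl

lemma fA_one {R : Type*} [CommRing R] (a : ℕ) (U : Polynomial R) (ha : 1 ≤ a) :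
    fA a U (j1A a) = Polynomial.derivative U := by
  unfold fA; rw [j1A_val a ha, Function.iterate_one]

lemma Pp_sub_single {R : Type*} [CommRing R] (a : ℕ) (U : Polynomial R)
    (k : Fin (a+1) → ℕ) (j : Fin (a+1)) (h : k j ≠ 0) :
    Pp a U (k - Pi.single j 1)
      = fA a U j ^ (k j - 1) * ∏ i ∈ Finset.univ.erase j, fA a U i ^ (k i) := by
  rw [Pp_eq', ← Finset.mul_prod_erase _ _ (Finset.mem_univ j)]
  congr 1
  · congr 1
    simp [Pi.sub_apply]
  · refine Finset.prod_congr rfl fun i hi => ?_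
    have hij : i ≠ j := Finset.ne_of_mem_erase hi
    simp [Pi.sub_apply, Pi.single_apply, hij]

/-- the moves -/
def MA (a : ℕ) (j : Fin (a+1)) (k : Fin (a+1) → ℕ) : Fin (a+1) → ℕ :=
  (k - Pi.single j 1) + Pi.single (j0A a) 1 + Pi.single (jsA a j) 1

def TA (a : ℕ) (p : (Fin (a+1) → ℕ) × Option (Fin (a+1))) : Fin (a+1) → ℕ :=
  p.2.elim (p.1 + Pi.single (j1A a) 1)
    (fun j => if (j:ℕ) < a ∧ p.1 j ≠ 0 then MA a j p.1 else p.1 + Pi.single (j1A a) 1)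

def cA (a n lam : ℕ) (q : (Fin (a+1) → ℕ) → ℚ)
    (p : (Fin (a+1) → ℕ) × Option (Fin (a+1))) : ℚ :=
  p.2.elim (((lam:ℚ) - n + 1) * q p.1)
    (fun j => if (j:ℕ) < a then (p.1 j : ℚ) * q p.1 else 0)

lemma TA_none (a : ℕ) (k : Fin (a+1) → ℕ) :
    TA a (k, none) = k + Pi.single (j1A a) 1 := rfl
lemma TA_some (a : ℕ) (k : Fin (a+1) → ℕ) (j : Fin (a+1)) :
    TA a (k, some j) = if (j:ℕ) < a ∧ k j ≠ 0 then MA a j k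
      else k + Pi.single (j1A a) 1 := rfl
lemma cA_none (a n lam : ℕ) (q) (k : Fin (a+1) → ℕ) :
    cA a n lam q (k, none) = ((lam:ℚ) - n + 1) * q k := rfl
lemma cA_some (a n lam : ℕ) (q) (k : Fin (a+1) → ℕ) (j : Fin (a+1)) :
    cA a n lam q (k, some j) = if (j:ℕ) < a then (k j : ℚ) * q k else 0 := rfl

lemma Iset_succ_of_j1 {a n : ℕ} (ha : 1 ≤ a) {k : Fin (a+1) → ℕ} (hk : k ∈ Iset a n) :
    k + Pi.single (j1A a) 1 ∈ Iset a (n+1) := by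
  obtain ⟨h1, h2⟩ := mem_Iset.mp hk
  refine mem_Iset.mpr ⟨?_, ?_⟩
  · rw [sum_add_single₁, h1]
  · rw [sum_add_single₂, h2, j1A_val a ha]

lemma Iset_M {a n : ℕ} {k : Fin (a+1) → ℕ} (hk : k ∈ Iset a n) (j : Fin (a+1))
    (hj : (j:ℕ) < a) (hkj : k j ≠ 0) : MA a j k ∈ Iset a (n+1) := by
  obtain ⟨h1, h2⟩ := mem_Iset.mp hk
  have hks := sub_add_single k j hkj
  have e1 : (∑ i, (k - Pi.single j 1 : Fin (a+1) → ℕ) i) + 1 = n := by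
    have h := sum_add_single₁ (k - Pi.single j 1) j; rw [hks] at h; omega
  have e2 : (∑ i : Fin (a+1), (i:ℕ) * (k - Pi.single j 1 : Fin (a+1) → ℕ) i) + (j:ℕ) = n := by
    have h := sum_add_single₂ (k - Pi.single j 1) j; rw [hks] at h; omega
  have hv0 := j0A_val a
  have hvs := jsA_val a j hj
  refine mem_Iset.mpr ⟨?_, ?_⟩
  · unfold MA
    rw [sum_add_single₁, sum_add_single₁]; omega
  · unfold MA
    rw [sum_add_single₂, sum_add_single₂]; omega

lemma perk (R : Type*) [CommRing R] [Algebra ℚ R] (a : ℕ) (ha : 1 ≤ a) (U : Polynomial R)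
    (hU' : Polynomial.derivative^[a+1] U = 0) (n lam : ℕ)
    (q : (Fin (a+1) → ℕ) → ℚ) (k : Fin (a+1) → ℕ) :
    ((lam : ℤ) - n + 1) • (Polynomial.derivative U
        * (Polynomial.C (algebraMap ℚ R (q k)) * Pp a U k))
      + U * Polynomial.derivative (Polynomial.C (algebraMap ℚ R (q k)) * Pp a U k)
    = ∑ o : Option (Fin (a+1)),
        Polynomial.C (algebraMap ℚ R (cA a n lam q (k, o))) * Pp a U (TA a (k, o)) := by
  have hzs : ∀ p : Polynomial R, ((lam : ℤ) - n + 1) • p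
      = Polynomial.C (algebraMap ℚ R ((lam:ℚ) - n + 1)) * p := by
    intro p
    have h1 : ((lam:ℚ) - n + 1) = (((lam : ℤ) - n + 1 : ℤ) : ℚ) := by push_cast; ring
    rw [h1, map_intCast, map_intCast, zsmul_eq_mul]
  rw [Fintype.sum_option]
  have hnone : Polynomial.C (algebraMap ℚ R (cA a n lam q (k, none))) * Pp a U (TA a (k, none))
      = ((lam : ℤ) - n + 1) • (Polynomial.derivative U
          * (Polynomial.C (algebraMap ℚ R (q k)) * Pp a U k)) := by
    rw [TA_none, cA_none, Pp_add, Pp_single', fA_one a U ha, hzs, map_mul, map_mul]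
    ring
  rw [hnone]
  congr 1
  have hd : Polynomial.derivative (Polynomial.C (algebraMap ℚ R (q k)) * Pp a U k)
      = Polynomial.C (algebraMap ℚ R (q k)) * Polynomial.derivative (Pp a U k) := by
    rw [derivative_mul, derivative_C, zero_mul, zero_add]
  rw [hd, Pp_eq' a U k, derivative_finset_prod', Finset.mul_sum, Finset.mul_sum]
  refine Finset.sum_congr rfl fun j _ => ?_
  by_cases hk0 : k j = 0
  · rw [cA_some, hk0, pow_zero, Polynomial.derivative_one, mul_zero, mul_zero, mul_zero,
      Nat.cast_zero, zero_mul, ite_self, map_zero, Polynomial.C_0, zero_mul]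
  · by_cases hja : (j:ℕ) < a
    · have hT : TA a (k, some j) = MA a j k := by rw [TA_some, if_pos ⟨hja, hk0⟩]
      have hC : cA a n lam q (k, some j) = (k j : ℚ) * q k := by rw [cA_some, if_pos hja]
      rw [hT, hC]
      rw [show MA a j k
          = (k - Pi.single j 1) + Pi.single (j0A a) 1 + Pi.single (jsA a j) 1 from rfl]
      rw [Pp_add, Pp_add, Pp_single', Pp_single', Pp_sub_single a U k j hk0,
        fA_zero, ← fA_deriv a U j hja, Polynomial.derivative_pow,
        map_mul, map_natCast (algebraMap ℚ R), map_mul]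
      rw [Polynomial.C_eq_natCast]
      ring
    · have hC : cA a n lam q (k, some j) = 0 := by rw [cA_some, if_neg hja]
      rw [hC, map_zero, Polynomial.C_0, zero_mul, Polynomial.derivative_pow,
        fA_deriv_top a U j hja hU', mul_zero, mul_zero, mul_zero, mul_zero]

lemma key (R : Type*) [CommRing R] [Algebra ℚ R] (a : ℕ) (ha : 1 ≤ a) (U : Polynomial R)
    (hU' : Polynomial.derivative^[a+1] U = 0) (lam : ℕ) :
    ∀ n : ℕ, n ≤ lam + 1 → ∃ q : (Fin (a+1) → ℕ) → ℚ,
      (∀ k ∈ Iset a n, 0 < q k) ∧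
      wpoly U n lam = ∑ k ∈ Iset a n, Polynomial.C (algebraMap ℚ R (q k)) * Pp a U k := by
  classical
  intro n
  induction n with
  | zero =>
      intro _
      refine ⟨fun _ => 1 / ((lam:ℚ)+1), fun k _ => by positivity, ?_⟩
      have hI : Iset a 0 = {(0 : Fin (a+1) → ℕ)} := by
        ext k
        simp only [mem_Iset, Finset.mem_singleton]
        constructor
        · rintro ⟨h1, _⟩
          funext i
          exact (Finset.sum_eq_zero_iff.mp h1) i (Finset.mem_univ i)
        · rintro rfl; simp
      rw [hI, Finset.sum_singleton]
      show Polynomial.C (algebraMap ℚ R (1 / ((lam:ℚ)+1))) = _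
      rw [show Pp a U 0 = 1 by simp [Pp], mul_one]
  | succ n ih =>
      intro hn1
      have hnlam : n ≤ lam := by omega
      obtain ⟨q, hq, heq⟩ := ih (by omega)
      have hlpos : 0 < (lam:ℚ) - n + 1 := by
        have h : (n:ℚ) ≤ (lam:ℚ) := by exact_mod_cast hnlam
        linarith
      -- step 1: rewrite as a sum over pairs
      have hw : wpoly U (n+1) lam
          = ∑ p ∈ (Iset a n) ×ˢ (Finset.univ : Finset (Option (Fin (a+1)))),
              Polynomial.C (algebraMap ℚ R (cA a n lam q p)) * Pp a U (TA a p) := by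
        rw [Finset.sum_product]
        rw [show wpoly U (n+1) lam
          = ((lam : ℤ) - n + 1) • (Polynomial.derivative U * wpoly U n lam)
            + U * Polynomial.derivative (wpoly U n lam) from rfl, heq]
        rw [Finset.mul_sum, Finset.smul_sum, derivative_sum, Finset.mul_sum,
          ← Finset.sum_add_distrib]
        exact Finset.sum_congr rfl fun k _ => perk R a ha U hU' n lam q k
      -- step 2: maps to
      have hmaps : ∀ p ∈ (Iset a n) ×ˢ (Finset.univ : Finset (Option (Fin (a+1)))),
          TA a p ∈ Iset a (n+1) := by
        rintro ⟨k, o⟩ hp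
        have hk : k ∈ Iset a n := (Finset.mem_product.mp hp).1
        match o with
        | none => exact Iset_succ_of_j1 ha hk
        | some j =>
            by_cases hcond : (j:ℕ) < a ∧ k j ≠ 0
            · rw [TA_some, if_pos hcond]
              exact Iset_M hk j hcond.1 hcond.2
            · rw [TA_some, if_neg hcond]
              exact Iset_succ_of_j1 ha hk
      have hw2 : wpoly U (n+1) lam = ∑ k' ∈ Iset a (n+1),
          ∑ p ∈ ((Iset a n) ×ˢ (Finset.univ : Finset (Option (Fin (a+1))))).filter
              (fun p => TA a p = k'),
            Polynomial.C (algebraMap ℚ R (cA a n lam q p)) * Pp a U (TA a p) := by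
        rw [hw, Finset.sum_fiberwise_of_maps_to hmaps]
      refine ⟨fun k' => ∑ p ∈ ((Iset a n) ×ˢ (Finset.univ : Finset (Option (Fin (a+1))))).filter
              (fun p => TA a p = k'), cA a n lam q p, ?_, ?_⟩
      · -- positivity
        intro k' hk'
        apply Finset.sum_pos'
        · rintro ⟨k, o⟩ hp
          rw [Finset.mem_filter] at hp
          have hk : k ∈ Iset a n := (Finset.mem_product.mp hp.1).1
          match o with
          | none => exact le_of_lt (mul_pos hlpos (hq k hk))
          | some j =>
              rw [cA_some]
              split
              · exact mul_nonneg (Nat.cast_nonneg _) (le_of_lt (hq k hk))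
              · exact le_refl 0
        · -- witness
          obtain ⟨hs1, hs2⟩ := mem_Iset.mp hk'
          by_cases h1 : k' (j1A a) ≠ 0
          · -- easy case
            have hks := sub_add_single k' (j1A a) h1
            have hkS : k' - Pi.single (j1A a) 1 ∈ Iset a n := by
              have e1 := sum_add_single₁ (k' - Pi.single (j1A a) 1) (j1A a)
              have e2 := sum_add_single₂ (k' - Pi.single (j1A a) 1) (j1A a)
              rw [hks] at e1 e2
              have hv1 := j1A_val a ha
              exact mem_Iset.mpr ⟨by omega, by omega⟩
            refine ⟨(k' - Pi.single (j1A a) 1, none), ?_, ?_⟩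
            · rw [Finset.mem_filter]
              exact ⟨Finset.mem_product.mpr ⟨hkS, Finset.mem_univ _⟩, by rw [TA_none, hks]⟩
            · exact mul_pos hlpos (hq _ hkS)
          · -- hard case
            push_neg at h1
            have hex : ∃ j : Fin (a+1), 2 ≤ (j:ℕ) ∧ k' j ≠ 0 := by
              by_contra hco
              push_neg at hco
              have hzero : (∑ j : Fin (a+1), (j:ℕ) * k' j) = 0 := by
                apply Finset.sum_eq_zero
                intro i _
                by_cases hi0 : (i:ℕ) = 0
                · rw [hi0, zero_mul]
                · by_cases hi1 : (i:ℕ) = 1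
                  · have hieq : i = j1A a := Fin.eq_of_val_eq (by rw [hi1, j1A_val a ha])
                    rw [hieq, h1, mul_zero]
                  · rw [hco i (by omega), mul_zero]
              omega
            have h0 : k' (j0A a) ≠ 0 := by
              intro h0
              have hle : ∀ i : Fin (a+1), 2 * k' i ≤ (i:ℕ) * k' i := by
                intro i
                by_cases hi0 : (i:ℕ) = 0
                · have hieq : i = j0A a := Fin.eq_of_val_eq (by rw [hi0, j0A_val])
                  rw [hieq, h0]; simp
                · by_cases hi1 : (i:ℕ) = 1
                  · have hieq : i = j1A a := Fin.eq_of_val_eq (by rw [hi1, j1A_val a ha])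
                    rw [hieq, h1]; simp
                  · exact Nat.mul_le_mul_right _ (by omega)
              have hsum := Finset.sum_le_sum (fun i (_ : i ∈ Finset.univ) => hle i)
              rw [← Finset.mul_sum, hs1, hs2] at hsum
              omega
            obtain ⟨j, hj2, hjne⟩ := hex
            have hja : (j:ℕ) ≤ a := by have := j.isLt; omega
            set jp : Fin (a+1) := ⟨(j:ℕ) - 1, by omega⟩ with hjp
            have hjpv : (jp : ℕ) = (j:ℕ) - 1 := rfl
            have d1 : jp ≠ j0A a := by
              intro hh; have := congrArg Fin.val hh; rw [hjpv, j0A_val] at this; omega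
            have d2 : jp ≠ j := by
              intro hh; have := congrArg Fin.val hh; rw [hjpv] at this; omega
            have d3 : j ≠ j0A a := by
              intro hh; have := congrArg Fin.val hh; rw [j0A_val] at this; omega
            set k : Fin (a+1) → ℕ := fun i =>
              (k' i + (if i = jp then 1 else 0)) - (if i = j0A a then 1 else 0)
                - (if i = j then 1 else 0) with hkdef
            have hk_jp : k jp = k' jp + 1 := by simp [hkdef, d1, d2]
            have hke : k + Pi.single (j0A a) 1 + Pi.single j 1 = k' + Pi.single jp 1 := by
              funext i
              simp only [Pi.add_apply, Pi.single_apply, hkdef]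
              have hkj0 : k' (j0A a) ≠ 0 := h0
              by_cases hi1 : i = jp
              · subst hi1; simp [d1, d2]
              · by_cases hi2 : i = j0A a
                · subst hi2; simp [Ne.symm d1, d3, Ne.symm d3]
                  omega
                · by_cases hi3 : i = j
                  · subst hi3; simp [Ne.symm d2, d3, hi2]
                    omega
                  · simp [hi1, hi2, hi3]
            have hkS : k ∈ Iset a n := by
              have e1 := sum_add_single₁ (k + Pi.single (j0A a) 1) j
              have e1' := sum_add_single₁ k (j0A a)
              have e2 := sum_add_single₂ (k + Pi.single (j0A a) 1) j
              have e2' := sum_add_single₂ k (j0A a)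
              have f1 := sum_add_single₁ k' jp
              have f2 := sum_add_single₂ k' jp
              rw [hke] at e1 e2
              have hv0 := j0A_val a
              exact mem_Iset.mpr ⟨by omega, by omega⟩
            have hjpa : (jp:ℕ) < a := by omega
            have hkjp : k jp ≠ 0 := by rw [hk_jp]; omega
            refine ⟨(k, some jp), ?_, ?_⟩
            · rw [Finset.mem_filter]
              refine ⟨Finset.mem_product.mpr ⟨hkS, Finset.mem_univ _⟩, ?_⟩
              rw [TA_some, if_pos ⟨hjpa, hkjp⟩]
              have hjs : jsA a jp = j := by
                apply Fin.eq_of_val_eq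
                rw [jsA_val a jp hjpa, hjpv]; omega
              have hsub := sub_add_single k jp hkjp
              have hcanc : MA a jp k + Pi.single jp 1 = k' + Pi.single jp 1 := by
                rw [show MA a jp k
                  = (k - Pi.single jp 1) + Pi.single (j0A a) 1 + Pi.single (jsA a jp) 1
                    from rfl, hjs]
                calc (k - Pi.single jp 1) + Pi.single (j0A a) 1 + Pi.single j 1
                      + Pi.single jp 1
                    = ((k - Pi.single jp 1) + Pi.single jp 1) + Pi.single (j0A a) 1
                      + Pi.single j 1 := by ac_rfl
                  _ = k + Pi.single (j0A a) 1 + Pi.single j 1 := by rw [hsub]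
                  _ = k' + Pi.single jp 1 := hke
              exact add_right_cancel hcanc
            · rw [cA_some, if_pos hjpa]
              exact mul_pos (by exact_mod_cast Nat.pos_of_ne_zero hkjp) (hq _ hkS)
      · -- the equation
        rw [hw2]
        refine Finset.sum_congr rfl fun k' hk' => ?_
        have hcongr : ∀ p ∈ ((Iset a n) ×ˢ (Finset.univ : Finset (Option (Fin (a+1))))).filter
            (fun p => TA a p = k'),
            Polynomial.C (algebraMap ℚ R (cA a n lam q p)) * Pp a U (TA a p)
              = Polynomial.C (algebraMap ℚ R (cA a n lam q p)) * Pp a U k' := by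
          intro p hp
          rw [(Finset.mem_filter.mp hp).2]
        rw [Finset.sum_congr rfl hcongr, ← Finset.sum_mul, map_sum, map_sum]

/-- for `1 ≤ n ≤ λ+1`, `w_{n,λ} = Σ_{(k_0,…,k_a) ∈ I_n} q_k · Π_j (U^{(j)})^{k_j}`
where `I_n` is the (finite) set of `(k_0,…,k_a)` with `Σ k_j = n` and `Σ j·k_j = n`,
and the `q_k` are strictly positive rationals. -/
theorem wpoly_eq_sum (R : Type*) [CommRing R] [Algebra ℚ R] (a b : ℕ) (ha : 2 ≤ a) (hb : 2 ≤ b)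
    (u : ℕ → R) (U : Polynomial R)
    (hU : U = ∑ j ∈ Finset.range (a + 1), Polynomial.C (u j) * Polynomial.X ^ j)
    (n lam : ℕ) (hn : 1 ≤ n) (hnlam : n ≤ lam + 1) :
    ∃ (s : Finset (Fin (a + 1) → ℕ)) (q : (Fin (a + 1) → ℕ) → ℚ),
      (∀ k : Fin (a + 1) → ℕ,
        k ∈ s ↔ ((∑ j, k j) = n ∧ (∑ j : Fin (a + 1), (j : ℕ) * k j) = n)) ∧
      (∀ k ∈ s, 0 < q k) ∧
      wpoly U n lam = ∑ k ∈ s, Polynomial.C (algebraMap ℚ R (q k)) *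
        ∏ j : Fin (a + 1), (Polynomial.derivative^[(j : ℕ)] U) ^ (k j) := by
  have ha1 : 1 ≤ a := by omega
  have hdeg : U.natDegree ≤ a := by
    rw [hU]
    refine Polynomial.natDegree_sum_le_of_forall_le _ _ fun j hj => ?_
    exact le_trans (Polynomial.natDegree_C_mul_X_pow_le _ _)
      (Nat.lt_succ_iff.mp (Finset.mem_range.mp hj))
  have hU' : Polynomial.derivative^[a+1] U = 0 :=
    Polynomial.iterate_derivative_eq_zero (by omega)
  obtain ⟨q, hqpos, heq⟩ := key R a ha1 U hU' lam n hnlam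
  exact ⟨Iset a n, q, fun k => mem_Iset, hqpos, heq⟩
end
end

section
/- Let n ≥ 0 and r ≥ 0 be integers, and let k, m be integers with 1 ≤ k ≤ m. Then Σ_{j=0}^{m} (−1)^j · binom(m, j) · (w_{k, (m+r−j)b})^{(n)}(Y) = 0 in R[Y], where ^{(n)} denotes the n-th derivative with respect to Y. -/
open Polynomial

noncomputable section

/-! For `k ≥ 1`, `w_{k,λ}` is a polynomial in `λ` of degree `< k` with coefficients in `R[Y]`:
the `1/(λ+1)` of `w_{0,λ}` cancels in `w_{1,λ} = U′`, and each further step of the recursion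
raises the degree in `λ` by at most one. This survives taking `n`-th derivatives in `Y` and the
substitution `λ ↦ λ b`, and the alternating sum is (up to reflection `j ↦ m - j`) an `m`-th
forward difference in `λ`, which kills every polynomial of degree `< m`. -/

open Finset fwdDiff

section PolynomialMaps

variable {G H : Type*} [AddCommGroup G] [AddCommGroup H]

def IsPolyDegreeLT (k : ℕ) (f : ℕ → G) : Prop :=
  ∃ c : ℕ → G, ∀ x, f x = ∑ i ∈ range k, (x : ℤ) ^ i • c i

namespace IsPolyDegreeLT

variable {k : ℕ} {f g : ℕ → G}

theorem const (v : G) : IsPolyDegreeLT 1 (fun _ ↦ v) :=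
  ⟨fun _ ↦ v, fun x ↦ by simp⟩

theorem add (hf : IsPolyDegreeLT k f) (hg : IsPolyDegreeLT k g) :
    IsPolyDegreeLT k (f + g) := by
  obtain ⟨c, hc⟩ := hf
  obtain ⟨d, hd⟩ := hg
  exact ⟨c + d, fun x ↦ by simp [hc, hd, smul_add, sum_add_distrib]⟩

theorem map (hf : IsPolyDegreeLT k f) (φ : G →+ H) : IsPolyDegreeLT k (φ ∘ f) := by
  obtain ⟨c, hc⟩ := hf
  exact ⟨φ ∘ c, fun x ↦ by simp [hc, map_sum, map_zsmul]⟩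

theorem mono {l : ℕ} (hf : IsPolyDegreeLT k f) (hkl : k ≤ l) : IsPolyDegreeLT l f := by
  obtain ⟨c, hc⟩ := hf
  refine ⟨fun i ↦ if i < k then c i else 0, fun x ↦ ?_⟩
  rw [hc, ← sum_range_add_sum_Ico _ hkl, sum_eq_zero (s := Ico k l) fun i hi ↦ ?_, add_zero]
  · exact sum_congr rfl fun i hi ↦ by simp [mem_range.mp hi]
  · simp [(mem_Ico.mp hi).1.not_gt]

theorem cast_smul (hf : IsPolyDegreeLT k f) :
    IsPolyDegreeLT (k + 1) (fun x ↦ (x : ℤ) • f x) := by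
  obtain ⟨c, hc⟩ := hf
  refine ⟨fun i ↦ if i = 0 then 0 else c (i - 1), fun x ↦ ?_⟩
  simp [hc, sum_range_succ', smul_sum, pow_succ', mul_smul]

theorem comp_mul (hf : IsPolyDegreeLT k f) (b : ℕ) :
    IsPolyDegreeLT k (fun x ↦ f (x * b)) := by
  obtain ⟨c, hc⟩ := hf
  exact ⟨fun i ↦ (b : ℤ) ^ i • c i, fun x ↦ by simp [hc, mul_pow, mul_smul]⟩

end IsPolyDegreeLT

theorem fwdDiff_iter_smul_const {M S : Type*} [AddCommMonoid M] [Ring S] [Module S G] (h : M)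
    (f : M → S) (v : G) (n : ℕ) : Δ_[h] ^[n] (fun x ↦ f x • v) = fun x ↦ Δ_[h] ^[n] f x • v := by
  induction n with
  | zero => rfl
  | succ n ih =>
    rw [Function.iterate_succ_apply', ih, fwdDiff_smul_const, Function.iterate_succ_apply']
    rfl

theorem fwdDiff_iter_sum_pow_smul_eq_zero {S : Type*} [CommRing S] [Module S G] {k m : ℕ}
    (hkm : k ≤ m) (c : ℕ → G) : Δ_[1] ^[m] (fun x : S ↦ ∑ i ∈ range k, x ^ i • c i) = 0 := by
  simp_rw [← sum_apply (s := range k) (g := fun i (x : S) ↦ x ^ i • c i),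
    fwdDiff_iter_finsetSum, fwdDiff_iter_smul_const]
  refine sum_eq_zero fun i hi ↦ ?_
  rw [fwdDiff_iter_pow_eq_zero_of_lt ((mem_range.mp hi).trans_le hkm)]
  ext; simp

theorem IsPolyDegreeLT.fwdDiff_iter_eq_zero {k m : ℕ} {f : ℕ → G} (hf : IsPolyDegreeLT k f)
    (hkm : k ≤ m) : Δ_[1] ^[m] f = 0 := by
  obtain ⟨c, hc⟩ := hf
  ext y
  have := congrFun (fwdDiff_iter_sum_pow_smul_eq_zero (S := ℤ) hkm c) y
  simp only [fwdDiff_iter_eq_sum_shift] at this ⊢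
  simpa [hc] using this

end PolynomialMaps

section Wpoly

variable {R : Type*} [CommRing R] [Algebra ℚ R] (U : R[X])

theorem wpoly_one (lam : ℕ) : wpoly U 1 lam = derivative U := by
  have hlam : ((lam : ℤ) + 1) • algebraMap ℚ R (1 / ((lam : ℚ) + 1)) = 1 := by
    rw [← map_zsmul, zsmul_eq_mul, Int.cast_add, Int.cast_natCast, Int.cast_one,
      mul_one_div_cancel (by positivity), map_one]
  rw [wpoly, wpoly, derivative_C, mul_zero, add_zero, Nat.cast_zero, sub_zero, mul_comm,
    ← smul_mul_assoc, smul_C, hlam, C_1, one_mul]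

theorem wpoly_succ_eq (k lam : ℕ) : wpoly U (k + 1) lam =
    (lam : ℤ) • (derivative U * wpoly U k lam) +
      ((1 - k : ℤ) • (derivative U * wpoly U k lam) + U * derivative (wpoly U k lam)) := by
  rw [wpoly, ← add_assoc, ← add_smul]
  congr 2
  ring

theorem isPolyDegreeLT_wpoly {k : ℕ} (hk : 1 ≤ k) : IsPolyDegreeLT k (wpoly U k) := by
  induction k, hk using Nat.le_induction with
  | base => simpa [funext (wpoly_one U)] using IsPolyDegreeLT.const (derivative U)
  | succ k _ ih =>
    let φ : R[X] →+ R[X] := AddMonoidHom.mulLeft (derivative U)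
    let ψ : R[X] →+ R[X] :=
      (1 - k : ℤ) • φ + (AddMonoidHom.mulLeft U).comp (derivative : R[X] →ₗ[R] R[X])
    have h := (ih.map φ).cast_smul.add ((ih.map ψ).mono k.le_succ)
    convert h using 1
    ext lam
    simp [φ, ψ, wpoly_succ_eq]

end Wpoly

theorem alternating_sum_wpoly_general (R : Type*) [CommRing R] [Algebra ℚ R]
    (b : ℕ) (U : Polynomial R)
    (n r k m : ℕ) (hk : 1 ≤ k) (hkm : k ≤ m) :
    ∑ j ∈ Finset.range (m + 1),
      ((-1 : ℤ) ^ j * (m.choose j : ℤ)) •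
        Polynomial.derivative^[n] (wpoly U k ((m + r - j) * b)) = 0 := by
  have hpoly : IsPolyDegreeLT k (fun x ↦ derivative^[n] (wpoly U k (x * b))) := by
    have h := (isPolyDegreeLT_wpoly U hk).map (derivative ^ n : Module.End R R[X]).toAddMonoidHom
    simpa [Function.comp_def, Module.End.coe_pow] using h.comp_mul b
  have hdiff := congrFun (hpoly.fwdDiff_iter_eq_zero hkm) r
  rw [fwdDiff_iter_eq_sum_shift, Pi.zero_apply] at hdiff
  rw [← sum_range_reflect, ← hdiff]
  refine sum_congr rfl fun j hj ↦ ?_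
  have hjm : j ≤ m := Nat.lt_succ_iff.mp (mem_range.mp hj)
  rw [add_tsub_cancel_right, Nat.choose_symm hjm, show m + r - (m - j) = r + j • 1 by
    rw [smul_eq_mul, mul_one]; omega]

/-- for `n, r ≥ 0` and `1 ≤ k ≤ m`,
`Σ_{j=0}^{m} (−1)^j·binom(m,j)·(w_{k,(m+r−j)b})^{(n)} = 0` in `R[Y]`. -/
theorem alternating_sum_wpoly (R : Type*) [CommRing R] [Algebra ℚ R]
    (a b : ℕ) (ha : 2 ≤ a) (hb : 2 ≤ b)
    (u : ℕ → R) (U : Polynomial R)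
    (hU : U = ∑ j ∈ Finset.range (a + 1), Polynomial.C (u j) * Polynomial.X ^ j)
    (n r k m : ℕ) (hk : 1 ≤ k) (hkm : k ≤ m) :
    ∑ j ∈ Finset.range (m + 1),
      ((-1 : ℤ) ^ j * (m.choose j : ℤ)) •
        Polynomial.derivative^[n] (wpoly U k ((m + r - j) * b)) = 0 :=
  alternating_sum_wpoly_general R b U n r k m hk hkm
end
end

section
/- Let R be a commutative ℚ-algebra, let a ≥ 1 and b ≥ 1 be integers, let u_0, …, u_a ∈ R and U(Y) = Σ_{j=0}^{a} u_j Y^j ∈ R[Y]. Let I(Y,Z) = Σ_{k≥0} I_k(Y)Z^k ∈ (R[Y])[[Z]] be the formal inverse of Y + Z·U(Y)^b, i.e. the unique power series with Σ_{k≥0} I_k(Y + Z·U(Y)^b)·Z^k = Y. For k ≥ 0 define v_k(Y) ∈ R[Y] to be the coefficient of Z^k in U(I(Y,Z)) = Σ_{j=0}^{a} u_j·I(Y,Z)^j. Then v_0(Y) = U(Y) and, for every m ≥ 1, v_m(Y) = −Σ_{j=1}^{m} (U(Y)^{bj}/j!) · v_{m−j}^{(j)}(Y), where ^{(j)} denotes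 the j-th derivative with respect to Y (equivalently, Σ_{j=0}^{m} (U(Y)^{bj}/j!) · v_{m−j}^{(j)}(Y) = 0 for m ≥ 1). -/
/-!
Substituting `Y ↦ Y + Z·U^b` in every coefficient of a series `∑ Fₖ(Y) Zᵏ` is a ring endomorphism
`Φ` of `R[Y]⟦Z⟧`: the `Zᵐ`-coefficient of `Φ F` only sees the truncation of `F` below `Z^(m+1)`,
on which `Φ` is polynomial evaluation. The hypothesis on `I` reads `Φ(I) = Y`, hence
`Φ(U(I)) = U(Φ(I)) = U(Y)`. By Taylor's formula the `Zᵐ`-coefficient of `Φ(∑ vₖ Zᵏ)` is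
`∑ⱼ Dⱼ(v_{m-j}) U^{bj}` with the Hasse derivatives `Dⱼ = (1/j!) dʲ/dYʲ`; comparing it with `U(Y)`
gives `v₀ = U` and the vanishing sums for `m ≥ 1`.
-/

open Finset
open scoped Polynomial PowerSeries

namespace PowerSeries

variable {S T : Type*} [CommSemiring S] [CommSemiring T] (ψ : S →+* T⟦X⟧)

theorem coeff_eval₂_X (Q : S[X]) (m : ℕ) :
    coeff m (Q.eval₂ ψ X) = ∑ k ∈ range (m + 1), coeff (m - k) (ψ (Q.coeff k)) := by
  induction Q using Polynomial.induction_on' with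
  | add p q hp hq =>
    simp only [Polynomial.eval₂_add, map_add, hp, hq, Polynomial.coeff_add, sum_add_distrib]
  | monomial i r =>
    simp only [Polynomial.eval₂_monomial, coeff_mul_X_pow', Polynomial.coeff_monomial]
    split_ifs <;> simp [apply_ite, *]

/-- `∑ Fₖ Xᵏ ↦ ∑ ψ(Fₖ) Xᵏ` -/
noncomputable def substCoeffsFun (F : S⟦X⟧) : T⟦X⟧ :=
  mk fun m ↦ ∑ k ∈ range (m + 1), coeff (m - k) (ψ (coeff k F))

theorem coeff_substCoeffsFun_trunc (F : S⟦X⟧) {m n : ℕ} (hmn : m < n) :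
    coeff m (substCoeffsFun ψ (trunc n F)) = coeff m (substCoeffsFun ψ F) := by
  simp only [substCoeffsFun, coeff_mk, Polynomial.coeff_coe, coeff_trunc]
  exact sum_congr rfl fun k hk ↦ by rw [if_pos (by grind)]

theorem substCoeffsFun_coe (Q : S[X]) : substCoeffsFun ψ Q = Q.eval₂ ψ X := by
  ext m
  rw [substCoeffsFun, coeff_mk, coeff_eval₂_X]
  simp only [Polynomial.coeff_coe]

noncomputable def substCoeffs : S⟦X⟧ →+* T⟦X⟧ where
  toFun := substCoeffsFun ψ
  map_one' := by simpa using substCoeffsFun_coe ψ 1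
  map_mul' F G := by
    ext m
    set n := m + 1
    have hmn : m < n := m.lt_succ_self
    calc coeff m (substCoeffsFun ψ (F * G))
        = coeff m (substCoeffsFun ψ ((trunc n F * trunc n G : S[X]) : S⟦X⟧)) := by
          rw [← coeff_substCoeffsFun_trunc ψ ((trunc n F * trunc n G : S[X]) : S⟦X⟧) hmn,
            Polynomial.coe_mul, trunc_trunc_mul_trunc, coeff_substCoeffsFun_trunc ψ _ hmn]
      _ = coeff m (substCoeffsFun ψ (trunc n F) * substCoeffsFun ψ (trunc n G)) := by
          rw [substCoeffsFun_coe, Polynomial.eval₂_mul, substCoeffsFun_coe, substCoeffsFun_coe]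
      _ = coeff m (substCoeffsFun ψ F * substCoeffsFun ψ G) := by
          simp only [coeff_mul]
          refine sum_congr rfl fun p hp ↦ ?_
          rw [HasAntidiagonal.mem_antidiagonal] at hp
          rw [coeff_substCoeffsFun_trunc ψ _ (by omega), coeff_substCoeffsFun_trunc ψ _ (by omega)]
  map_zero' := by ext; simp [substCoeffsFun]
  map_add' F G := by ext; simp [substCoeffsFun, sum_add_distrib]

theorem coeff_substCoeffs (F : S⟦X⟧) (m : ℕ) :
    coeff m (substCoeffs ψ F) = ∑ k ∈ range (m + 1), coeff (m - k) (ψ (coeff k F)) :=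
  show coeff m (substCoeffsFun ψ F) = _ from coeff_mk m _

theorem substCoeffs_C (s : S) : substCoeffs ψ (C s) = ψ s := by
  change substCoeffsFun ψ _ = _
  simpa using substCoeffsFun_coe ψ (Polynomial.C s)

end PowerSeries

namespace Polynomial

variable {A : Type*} [CommSemiring A]

theorem coeff_C_X_add_X_mul_C_pow (c : A[X]) (i n : ℕ) :
    ((C X + X * C c) ^ i).coeff n = X ^ (i - n) * (i.choose n : A[X]) * c ^ n := by
  have : C X + X * C c = (X + C X).comp (C c * X) := by
    rw [add_comp, X_comp, C_comp]; ring
  rw [this, ← pow_comp, comp_C_mul_X_coeff, coeff_X_add_C_pow]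

/-- `p(Y) ↦ p(Y + X·c)`, where `Y` is the variable of `A[X]` and `X` that of the power series. -/
noncomputable def evalAddXMul (c : A[X]) : A[X] →+* A[X]⟦X⟧ :=
  (coeToPowerSeries.ringHom).comp (eval₂RingHom (C.comp C) (C X + X * C c))

theorem evalAddXMul_C (c : A[X]) (r : A) : evalAddXMul c (C r) = PowerSeries.C (C r) := by
  simp [evalAddXMul]

theorem coeff_evalAddXMul (c p : A[X]) (n : ℕ) :
    PowerSeries.coeff n (evalAddXMul c p) = hasseDeriv n p * c ^ n := by
  simp only [evalAddXMul, RingHom.comp_apply, coe_eval₂RingHom, coeToPowerSeries.ringHom_apply,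
    coeff_coe]
  induction p using Polynomial.induction_on' with
  | add p q hp hq => rw [eval₂_add, coeff_add, hp, hq, map_add, add_mul]
  | monomial i r =>
    rw [eval₂_monomial, RingHom.comp_apply, coeff_C_mul, coeff_C_X_add_X_mul_C_pow,
      hasseDeriv_monomial, ← C_mul_X_pow_eq_monomial, C_mul, C_eq_natCast]
    ring

theorem coeff_substCoeffs_evalAddXMul (c : A[X]) (F : A[X]⟦X⟧) (m : ℕ) :
    PowerSeries.coeff m (PowerSeries.substCoeffs (evalAddXMul c) F)
      = ∑ j ∈ range (m + 1), hasseDeriv j (PowerSeries.coeff (m - j) F) * c ^ j := by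
  rw [PowerSeries.coeff_substCoeffs, ← sum_range_reflect]
  refine sum_congr rfl fun j hj ↦ ?_
  rw [coeff_evalAddXMul, Nat.add_sub_cancel, Nat.sub_sub_self (by grind)]

theorem C_inv_factorial_mul_iterate_derivative {R : Type*} [Semiring R] [Algebra ℚ R] (j : ℕ)
    (q : R[X]) : C (algebraMap ℚ R (1 / j.factorial)) * derivative^[j] q = hasseDeriv j q := by
  have : algebraMap ℚ R (1 / j.factorial) * j.factorial = 1 := by
    rw [← map_natCast (algebraMap ℚ R), ← map_mul, one_div_mul_cancel (by positivity), map_one]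
  rw [← factorial_smul_hasseDeriv, LinearMap.smul_apply, nsmul_eq_mul, ← mul_assoc,
    ← C_eq_natCast, ← C_mul, this, C_1, one_mul]

end Polynomial

theorem coeff_U_formal_inverse_general (R : Type*) [CommRing R] [Algebra ℚ R]
    (b : ℕ) (U : Polynomial R)
    (I : ℕ → Polynomial R)
    (hI : (PowerSeries.mk fun m => ∑ k ∈ Finset.range (m + 1),
        (Polynomial.eval₂ (Polynomial.C.comp Polynomial.C)
          (Polynomial.C Polynomial.X + Polynomial.X * Polynomial.C (U ^ b))
          (I k)).coeff (m - k))
      = PowerSeries.C (R := Polynomial R) Polynomial.X)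
    (v : ℕ → Polynomial R)
    (hv : ∀ k, v k = PowerSeries.coeff (R := Polynomial R) k
        (Polynomial.eval₂ ((PowerSeries.C (R := Polynomial R)).comp Polynomial.C)
          (PowerSeries.mk fun n => I n) U)) :
    v 0 = U ∧ ∀ m, 1 ≤ m →
      ∑ j ∈ Finset.range (m + 1),
        Polynomial.C (algebraMap ℚ R (1 / (j.factorial : ℚ))) * U ^ (b * j) *
          Polynomial.derivative^[j] (v (m - j)) = 0 := by
  open Polynomial in
  set Φ := PowerSeries.substCoeffs (evalAddXMul (U ^ b))
  have hΦI : Φ (PowerSeries.mk I) = PowerSeries.C X := by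
    rw [← hI]
    ext m
    simp [Φ, PowerSeries.coeff_substCoeffs, evalAddXMul, coeff_coe]
  have hΦV : Φ (U.eval₂ (PowerSeries.C.comp C) (PowerSeries.mk I)) = PowerSeries.C U := by
    have hΦC : Φ.comp (PowerSeries.C.comp C) = PowerSeries.C.comp C := by
      ext : 1; simp [Φ, PowerSeries.substCoeffs_C, evalAddXMul_C]
    rw [hom_eval₂, hΦI, hΦC, ← hom_eval₂, eval₂_C_X]
  have key : ∀ m, ∑ j ∈ range (m + 1), hasseDeriv j (v (m - j)) * (U ^ b) ^ j
      = if m = 0 then U else 0 := by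
    intro m
    simpa [Φ, hv, coeff_substCoeffs_evalAddXMul, PowerSeries.coeff_C] using
      congrArg (PowerSeries.coeff m) hΦV
  refine ⟨by simpa using key 0, fun m hm ↦ ?_⟩
  calc _ = ∑ j ∈ range (m + 1), hasseDeriv j (v (m - j)) * (U ^ b) ^ j :=
        sum_congr rfl fun j _ ↦ by rw [← C_inv_factorial_mul_iterate_derivative, pow_mul]; ring
    _ = 0 := by rw [key m, if_neg (by omega)]

/-- Let `R` be a commutative `ℚ`-algebra, `U(Y) = Σ_{j=0}^{a} u_j Y^j`, and let
`I(Y,Z) = Σ_k I_k(Y)Z^k` be the formal inverse of `Y + Z·U(Y)^b` in `(R[Y])[[Z]]`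
(expressed coefficientwise, the `k`-th term of `Σ_k I_k(Y + Z·U(Y)^b)·Z^k` being divisible
by `Z^k`).  Define `v_k(Y)` to be the coefficient of `Z^k` in `U(I(Y,Z))`.  Then
`v_0 = U` and, for every `m ≥ 1`, `Σ_{j=0}^{m} (U^{bj}/j!)·v_{m−j}^{(j)} = 0`, i.e.
`v_m = −Σ_{j=1}^{m} (U^{bj}/j!)·v_{m−j}^{(j)}`. -/
theorem coeff_U_formal_inverse (R : Type*) [CommRing R] [Algebra ℚ R]
    (a b : ℕ) (ha : 1 ≤ a) (hb : 1 ≤ b) (u : ℕ → R) (U : Polynomial R)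
    (hU : U = ∑ j ∈ Finset.range (a + 1), Polynomial.C (u j) * Polynomial.X ^ j)
    (I : ℕ → Polynomial R)
    (hI : (PowerSeries.mk fun m => ∑ k ∈ Finset.range (m + 1),
        (Polynomial.eval₂ (Polynomial.C.comp Polynomial.C)
          (Polynomial.C Polynomial.X + Polynomial.X * Polynomial.C (U ^ b))
          (I k)).coeff (m - k))
      = PowerSeries.C (R := Polynomial R) Polynomial.X)
    (v : ℕ → Polynomial R)
    (hv : ∀ k, v k = PowerSeries.coeff (R := Polynomial R) k
        (Polynomial.eval₂ ((PowerSeries.C (R := Polynomial R)).comp Polynomial.C)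
          (PowerSeries.mk fun n => I n) U)) :
    v 0 = U ∧ ∀ m, 1 ≤ m →
      ∑ j ∈ Finset.range (m + 1),
        Polynomial.C (algebraMap ℚ R (1 / (j.factorial : ℚ))) * U ^ (b * j) *
          Polynomial.derivative^[j] (v (m - j)) = 0 :=
  coeff_U_formal_inverse_general R b U I hI v hv
end

section
/- Let a, b ≥ 2 be integers, let R be a commutative ℚ-algebra, let u_0, …, u_a ∈ R, set U(Y) = Σ_{j=0}^{a} u_j Y^j ∈ R[Y], and define v_m(Y) ∈ R[Y] by the recursion in the context. Let c ≥ 1 be an integer, let X be another indeterminate, and in the polynomial ring R[X,Y,Z] set W = Y + Z·(Z^c·X + U(Y))^b. Then Z^{c+1} divides U(Y) − Σ_{k=0}^{c−1} v_k(W)·Z^k − v_c(Y)·Z^c in R[X,Y,Z], where v_k(W) denotes the substitution of W for Y in v_k. -/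
noncomputable section

/-- The polynomials `v_m`: `v_0 = U` and
`v_m = −Σ_{j=1}^{m} (U^{bj}/j!)·v_{m−j}^{(j)}` for `m ≥ 1`. -/
noncomputable def vpoly {R : Type*} [CommRing R] [Algebra ℚ R]
    (b : ℕ) (U : Polynomial R) : ℕ → Polynomial R
  | 0 => U
  | m + 1 =>
      -∑ j ∈ Finset.range (m + 1),
        Polynomial.C (algebraMap ℚ R (1 / ((j + 1).factorial : ℚ))) * U ^ (b * (j + 1)) *
          Polynomial.derivative^[j + 1] (vpoly b U (m - j))
  decreasing_by exact Nat.lt_succ_of_le (Nat.sub_le m j)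

/-!
Modulo `Z ^ (c + 1)` we have `Z * (Z ^ c * X + U(Y)) ^ b = Z * U(Y) ^ b`, so `W` may be replaced by
`Y + Z * U(Y) ^ b`, and `v_c(W) * Z ^ c` by `v_c(Y) * Z ^ c`. Expanding `v_k(Y + Z * U(Y) ^ b)` by
Taylor's formula with Hasse derivatives `D_j = (1 / j!) (d/dY) ^ j`, the coefficient of `Z ^ m` in
`∑_{k ≤ c} v_k(Y + Z * U(Y) ^ b) * Z ^ k` is `∑_{j + k = m} U ^ (b j) * D_j v_k`, which the recursion
defining `v_m` makes `0` for `m ≥ 1` and `U` for `m = 0`.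
-/

open Polynomial Finset

theorem mul_pow_eq_mul_pow_of_mul_sub_eq_zero {A : Type*} [CommRing A] {z t u : A}
    (h : z * (t - u) = 0) (b : ℕ) : z * t ^ b = z * u ^ b := by
  obtain ⟨q, hq⟩ := sub_dvd_pow_sub_pow t u b
  rw [← sub_eq_zero, ← mul_sub, hq, ← mul_assoc, h, zero_mul]

section Taylor

variable {R A : Type*} [CommRing R] [CommRing A] [Algebra R A]

theorem Polynomial.map_hasseDeriv {S : Type*} [Semiring S] (φ : R →+* S) (k : ℕ) (p : R[X]) :
    (hasseDeriv k p).map φ = hasseDeriv k (p.map φ) := by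
  ext n
  simp [hasseDeriv_coeff, coeff_map]

theorem Polynomial.aeval_add_eq_sum_hasseDeriv (P : R[X]) (y e : A) {N : ℕ}
    (hN : P.natDegree < N) :
    aeval (y + e) P = ∑ j ∈ range N, aeval y (hasseDeriv j P) * e ^ j := by
  rw [aeval_def, ← eval_map, add_comm, ← taylor_eval,
    eval_eq_sum_range' (by rw [natDegree_taylor]; exact natDegree_map_le.trans_lt hN)]
  simp only [taylor_coeff, ← map_hasseDeriv, eval_map, ← aeval_def]

theorem Polynomial.aeval_add_mul_mul_pow_eq_sum {n : ℕ} {ζ : A} (hζ : ζ ^ (n + 1) = 0)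
    (P : R[X]) (y e : A) (k : ℕ) :
    aeval (y + ζ * e) P * ζ ^ k
      = ∑ j ∈ range (n + 1 - k), aeval y (hasseDeriv j P) * e ^ j * ζ ^ (j + k) := by
  have hsub : range (n + 1 - k) ⊆ range (P.natDegree + 1 + (n + 1 - k)) :=
    range_subset_range.2 (Nat.le_add_left _ _)
  calc aeval (y + ζ * e) P * ζ ^ k
      = ∑ j ∈ range (P.natDegree + 1 + (n + 1 - k)),
          aeval y (hasseDeriv j P) * e ^ j * ζ ^ (j + k) := by
        rw [aeval_add_eq_sum_hasseDeriv P y (ζ * e) (N := P.natDegree + 1 + (n + 1 - k)) (by omega),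
          sum_mul]
        exact sum_congr rfl fun j _ => by ring
    _ = _ := by
      refine (sum_subset hsub fun j _ hj => ?_).symm
      rw [pow_eq_zero_of_le (by simp at hj; omega) hζ, mul_zero]

theorem Polynomial.aeval_add_mul_mul_pow_self {n : ℕ} {ζ : A} (hζ : ζ ^ (n + 1) = 0)
    (P : R[X]) (y e : A) : aeval (y + ζ * e) P * ζ ^ n = aeval y P * ζ ^ n := by
  simp [aeval_add_mul_mul_pow_eq_sum hζ]

end Taylor

section vpoly

variable {R : Type*} [CommRing R] [Algebra ℚ R]

theorem Polynomial.C_inv_factorial_mul_iterate_derivative_s15 (k : ℕ) (P : R[X]) :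
    C (algebraMap ℚ R (1 / (k.factorial : ℚ))) * derivative^[k] P = hasseDeriv k P := by
  rw [← factorial_smul_hasseDeriv, ← smul_eq_C_mul, LinearMap.smul_apply, algebraMap_smul,
    ← Nat.cast_smul_eq_nsmul ℚ, smul_smul, one_div, inv_mul_cancel₀ (by positivity), one_smul]

variable (b : ℕ) (U : R[X])

theorem vpoly_succ (m : ℕ) :
    vpoly b U (m + 1)
      = -∑ p ∈ antidiagonal m, U ^ (b * (p.2 + 1)) * hasseDeriv (p.2 + 1) (vpoly b U p.1) := by
  rw [vpoly, ← Nat.sum_antidiagonal_swap]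
  simp only [Prod.fst_swap, Prod.snd_swap]
  rw [Nat.sum_antidiagonal_eq_sum_range_succ
    (fun j k => U ^ (b * (j + 1)) * hasseDeriv (j + 1) (vpoly b U k))]
  refine congrArg _ (sum_congr rfl fun j _ => ?_)
  rw [mul_comm (C _), mul_assoc, C_inv_factorial_mul_iterate_derivative_s15]

theorem sum_antidiagonal_pow_mul_hasseDeriv_vpoly (m : ℕ) :
    ∑ p ∈ antidiagonal m, U ^ (b * p.2) * hasseDeriv p.2 (vpoly b U p.1)
      = if m = 0 then U else 0 := by
  cases m with
  | zero => simp [vpoly]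
  | succ m => simp [Nat.sum_antidiagonal_succ', vpoly_succ]

end vpoly

section

variable {R A : Type*} [CommRing R] [Algebra ℚ R] [CommRing A] [Algebra R A]

theorem sum_aeval_vpoly_mul_pow {n : ℕ} {ζ : A} (hζ : ζ ^ (n + 1) = 0) (b : ℕ) (U : R[X])
    (y : A) :
    ∑ k ∈ range (n + 1), aeval (y + ζ * aeval y U ^ b) (vpoly b U k) * ζ ^ k = aeval y U := by
  have hdiag : ∀ m, ∑ k ∈ range (m + 1),
      aeval y (hasseDeriv (m - k) (vpoly b U k)) * (aeval y U ^ b) ^ (m - k) * ζ ^ (m - k + k)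
        = aeval y (∑ p ∈ antidiagonal m, U ^ (b * p.2) * hasseDeriv p.2 (vpoly b U p.1))
            * ζ ^ m := by
    intro m
    rw [Nat.sum_antidiagonal_eq_sum_range_succ
      (fun k j => U ^ (b * j) * hasseDeriv j (vpoly b U k)), map_sum, sum_mul]
    refine sum_congr rfl fun k hk => ?_
    rw [Nat.sub_add_cancel (Nat.lt_succ_iff.1 (mem_range.1 hk)), map_mul, map_pow, pow_mul]
    ring
  simp_rw [aeval_add_mul_mul_pow_eq_sum hζ, ← sum_range_diag_flip, hdiag,
    sum_antidiagonal_pow_mul_hasseDeriv_vpoly]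
  simp [apply_ite (aeval y), ite_mul]

end

theorem zpow_dvd_truncation_general (R : Type*) [CommRing R] [Algebra ℚ R]
    (b c : ℕ) (U : Polynomial R) :
    (MvPolynomial.X (2 : Fin 3)) ^ (c + 1) ∣
      (Polynomial.aeval (MvPolynomial.X (1 : Fin 3)) U
        - ∑ k ∈ Finset.range c,
            Polynomial.aeval
              (MvPolynomial.X (1 : Fin 3) + MvPolynomial.X (2 : Fin 3) *
                ((MvPolynomial.X (2 : Fin 3)) ^ c * MvPolynomial.X (0 : Fin 3)
                  + Polynomial.aeval (MvPolynomial.X (1 : Fin 3)) U) ^ b)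
              (vpoly b U k) * (MvPolynomial.X (2 : Fin 3)) ^ k
        - Polynomial.aeval (MvPolynomial.X (1 : Fin 3)) (vpoly b U c) *
            (MvPolynomial.X (2 : Fin 3)) ^ c
        : MvPolynomial (Fin 3) R) := by
  rw [← Ideal.Quotient.eq_zero_iff_dvd, ← Ideal.Quotient.mkₐ_eq_mk R]
  set π :=
    Ideal.Quotient.mkₐ R (Ideal.span {(MvPolynomial.X 2 : MvPolynomial (Fin 3) R) ^ (c + 1)})
  simp only [map_sub, map_sum, map_mul, map_pow, map_add, ← aeval_algHom_apply]
  set ζ := π (MvPolynomial.X 2)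
  set y := π (MvPolynomial.X 1)
  have hζ : ζ ^ (c + 1) = 0 := by
    rw [← map_pow, Ideal.Quotient.mkₐ_eq_mk, Ideal.Quotient.eq_zero_iff_dvd]
  have hW : ζ * (ζ ^ c * π (MvPolynomial.X 0) + aeval y U) ^ b = ζ * aeval y U ^ b :=
    mul_pow_eq_mul_pow_of_mul_sub_eq_zero
      (by rw [add_sub_cancel_right, ← mul_assoc, ← pow_succ', hζ, zero_mul]) b
  rw [hW, ← aeval_add_mul_mul_pow_self hζ _ y (aeval y U ^ b), sub_sub,
    ← sum_range_succ (fun k => aeval _ (vpoly b U k) * ζ ^ k), sum_aeval_vpoly_mul_pow hζ,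
    sub_self]

/-- in `R[X,Y,Z]` (with `X = X 0`, `Y = X 1`, `Z = X 2`), setting
`W = Y + Z·(Z^c·X + U(Y))^b`, the power `Z^{c+1}` divides
`U(Y) − Σ_{k=0}^{c−1} v_k(W)·Z^k − v_c(Y)·Z^c`. -/
theorem zpow_dvd_truncation (R : Type*) [CommRing R] [Algebra ℚ R]
    (a b c : ℕ) (ha : 2 ≤ a) (hb : 2 ≤ b) (hc : 1 ≤ c)
    (u : ℕ → R) (U : Polynomial R)
    (hU : U = ∑ j ∈ Finset.range (a + 1), Polynomial.C (u j) * Polynomial.X ^ j) :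
    (MvPolynomial.X (2 : Fin 3)) ^ (c + 1) ∣
      (Polynomial.aeval (MvPolynomial.X (1 : Fin 3)) U
        - ∑ k ∈ Finset.range c,
            Polynomial.aeval
              (MvPolynomial.X (1 : Fin 3) + MvPolynomial.X (2 : Fin 3) *
                ((MvPolynomial.X (2 : Fin 3)) ^ c * MvPolynomial.X (0 : Fin 3)
                  + Polynomial.aeval (MvPolynomial.X (1 : Fin 3)) U) ^ b)
              (vpoly b U k) * (MvPolynomial.X (2 : Fin 3)) ^ k
        - Polynomial.aeval (MvPolynomial.X (1 : Fin 3)) (vpoly b U c) *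
            (MvPolynomial.X (2 : Fin 3)) ^ c
        : MvPolynomial (Fin 3) R) :=
  zpow_dvd_truncation_general R b c U
end
end
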